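/- arXiv:2302.05388 — 9 statements merged into one kernel-verified Lean document; each statement's English description precedes it below -/
import Mathlib

section
/- An ordinal γ (with the order topology) is n-sequentially compact for all n ≥ 1 if and only if γ has cofinality different from ω. -/
theorem ramsey_two : ∀ (n : ℕ) (c : Finset ℕ → Bool) (A : Set ℕ), A.Infinite →
    ∃ B ⊆ A, B.Infinite ∧ ∃ b : Bool, ∀ s : Finset ℕ, s.card = n → ↑s ⊆ B → c s = b := by
  intro n
  induction n with
  | zero =>
    intro c A hA
    refine ⟨A, le_refl _, hA, c ∅, fun s hs _ => ?_⟩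
    rw [Finset.card_eq_zero] at hs; rw [hs]
  | succ n ih =>
    intro c A hA
    -- step function
    have hstep : ∀ C : Set ℕ, ∃ (a : ℕ) (C' : Set ℕ) (bb : Bool), C.Infinite →
        (a ∈ C ∧ C' ⊆ C ∧ C'.Infinite ∧ (∀ x ∈ C', a < x) ∧
          ∀ s : Finset ℕ, s.card = n → ↑s ⊆ C' → c (insert a s) = bb) := by
      intro C
      by_cases hC : C.Infinite
      · obtain ⟨a, haC⟩ := hC.nonempty
        have hCI : (C ∩ Set.Ioi a).Infinite := by
          have : C ∩ Set.Ioi a = C \ Set.Iic a := by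
            rw [Set.diff_eq, Set.compl_Iic]
          rw [this]
          exact hC.diff (Set.finite_Iic a)
        obtain ⟨B', hB'sub, hB'inf, bb, hbb⟩ := ih (fun s => c (insert a s)) _ hCI
        exact ⟨a, B', bb, fun _ => ⟨haC, hB'sub.trans Set.inter_subset_left, hB'inf,
          fun x hx => (hB'sub hx).2, hbb⟩⟩
      · exact ⟨0, ∅, true, fun h => absurd h hC⟩
    choose fa fC fb hh using hstep
    set g : ℕ → Set ℕ := fun k => Nat.rec A (fun _ C => fC C) k with hg_def
    have g0 : g 0 = A := rfl
    have gsucc : ∀ k, g (k + 1) = fC (g k) := fun k => rfl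
    have ginf : ∀ k, (g k).Infinite ∧ g k ⊆ A := by
      intro k
      induction k with
      | zero => exact ⟨hA, le_refl _⟩
      | succ k ihk =>
        obtain ⟨h1, h2, h3, h4, h5⟩ := hh (g k) ihk.1
        rw [gsucc]
        exact ⟨h3, h2.trans ihk.2⟩
    have hstepk : ∀ k, fa (g k) ∈ g k ∧ g (k+1) ⊆ g k ∧ (∀ x ∈ g (k+1), fa (g k) < x) ∧
        ∀ s : Finset ℕ, s.card = n → ↑s ⊆ g (k+1) → c (insert (fa (g k)) s) = fb (g k) := by
      intro k
      obtain ⟨h1, h2, h3, h4, h5⟩ := hh (g k) (ginf k).1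
      rw [gsucc]
      exact ⟨h1, h2, h4, h5⟩
    have gchain : ∀ j k, k ≤ j → g j ⊆ g k := by
      intro j
      induction j with
      | zero => intro k hk; rw [Nat.le_zero.1 hk]
      | succ j ihj =>
        intro k hk
        rcases Nat.eq_or_lt_of_le hk with h | h
        · rw [h]
        · exact ((hstepk j).2.1).trans (ihj k (Nat.lt_succ_iff.1 h))
    set a : ℕ → ℕ := fun k => fa (g k) with ha_def
    have hamono : StrictMono a := by
      apply strictMono_nat_of_lt_succ
      intro k
      exact (hstepk k).2.2.1 _ (hstepk (k+1)).1
    -- pigeonhole on colors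
    have : ∃ bb : Bool, {k : ℕ | fb (g k) = bb}.Infinite := by
      by_contra hcon
      push_neg at hcon
      have : (Set.univ : Set ℕ) ⊆ {k | fb (g k) = true} ∪ {k | fb (g k) = false} := by
        intro k _
        rcases Bool.eq_false_or_eq_true (fb (g k)) with h | h
        · exact Or.inl h
        · exact Or.inr h
      exact Set.infinite_univ (((hcon true).union (hcon false)).subset this)
    obtain ⟨bb, hK⟩ := this
    refine ⟨a '' {k | fb (g k) = bb}, ?_, hK.image (hamono.injective.injOn), bb, ?_⟩
    · rintro x ⟨k, _, rfl⟩
      exact (ginf k).2 ((hstepk k).1)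
    · intro s hcard hsub
      have hne : s.Nonempty := Finset.card_pos.1 (by rw [hcard]; exact Nat.succ_pos n)
      obtain ⟨k, hkK, hk⟩ := hsub (s.min'_mem hne)
      have hrest : (s.erase (s.min' hne)).card = n := by
        rw [Finset.card_erase_of_mem (s.min'_mem hne), hcard]; rfl
      have hrsub : ↑(s.erase (s.min' hne)) ⊆ g (k + 1) := by
        intro x hx
        rcases Finset.mem_erase.1 hx with ⟨hxne, hxs⟩
        obtain ⟨j, hjK, hj⟩ := hsub hxs
        have : k < j := by
          apply hamono.lt_iff_lt.1
          rw [hk, hj]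
          exact lt_of_le_of_ne (s.min'_le x hxs) (Ne.symm hxne)
        rw [← hj]
        exact gchain j (k+1) this ((hstepk j).1)
      have h5 := (hstepk k).2.2.2 _ hrest hrsub
      have h6 : c (insert (a k) (s.erase (s.min' hne))) = fb (g k) := h5
      rw [hk, Finset.insert_erase (s.min'_mem hne)] at h6
      rw [h6, hkK]


/-- `f ↾ [B]^n` converges to `p`. -/
def ConvergesOn {X : Type*} [TopologicalSpace X] (n : ℕ) (B : Set ℕ) (f : Finset ℕ → X)
    (p : X) : Prop :=
  ∀ U ∈ nhds p, ∃ F : Finset ℕ, ∀ s : Finset ℕ, s.card = n → ↑s ⊆ B \ ↑F → f s ∈ U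

/-- `X` is `n`-sequentially compact. -/
def NSeqCompact (n : ℕ) (X : Type*) [TopologicalSpace X] : Prop :=
  ∀ f : Finset ℕ → X, ∃ B : Set ℕ, B.Infinite ∧ ∃ p : X, ConvergesOn n B f p

/-- An ordinal `γ` (the set of ordinals `< γ`, with the order topology) is `n`-sequentially
compact for all `n ≥ 1` iff its cofinality is different from `ω`. -/
theorem ordinal_nSeqCompact_iff_cof_ne_aleph0 (γ : Ordinal) :
    letI : TopologicalSpace (Set.Iio γ) := Preorder.topology (Set.Iio γ)
    ((∀ n : ℕ, 1 ≤ n → NSeqCompact n (Set.Iio γ)) ↔ γ.cof ≠ Cardinal.aleph0) := by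
  letI : TopologicalSpace (Set.Iio γ) := Preorder.topology (Set.Iio γ)
  haveI : OrderTopology (Set.Iio γ) := ⟨rfl⟩
  constructor
  · -- if cof γ = ω then not 1-seq compact
    intro H hcof
    have hlim : Order.IsSuccLimit γ := by
      rcases Ordinal.zero_or_succ_or_isSuccLimit γ with h | ⟨a, h⟩ | h
      · rw [h, Ordinal.cof_zero] at hcof
        exact (Cardinal.aleph0_ne_zero hcof.symm).elim
      · rw [← h, Ordinal.cof_succ] at hcof
        exact absurd hcof Cardinal.one_lt_aleph0.ne
      · exact h
    have hγpos : (0 : Ordinal) < γ := hlim.pos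
    obtain ⟨ι, F, hlsub, hmk⟩ := Ordinal.exists_lsub_cof γ
    rw [hcof] at hmk
    obtain ⟨d⟩ := Cardinal.denumerable_iff.2 hmk
    set x : ℕ → Ordinal := fun k => F ((Denumerable.eqv ι).symm k) with hx_def
    have hxlt : ∀ k, x k < γ := by
      intro k
      rw [← hlsub]
      exact Ordinal.lt_lsub F _
    have hxcof : ∀ o < γ, ∃ k, o ≤ x k := by
      intro o ho
      rw [← hlsub] at ho
      obtain ⟨i, hi⟩ := Ordinal.lt_lsub_iff.1 ho
      refine ⟨(Denumerable.eqv ι) i, ?_⟩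
      show o ≤ F ((Denumerable.eqv ι).symm ((Denumerable.eqv ι) i))
      rwa [Equiv.symm_apply_apply]
    set y : ℕ → Ordinal := fun k => (Finset.range (k+1)).sup x with hy_def
    have hylt : ∀ k, y k < γ := by
      intro k
      rw [hy_def]
      refine Finset.sup_lt_iff ?_ |>.2 fun i _ => hxlt i
      rwa [Ordinal.bot_eq_zero]
    have hymono : Monotone y := by
      intro i j hij
      exact Finset.sup_mono (Finset.range_subset_range.2 (by omega))
    have hyx : ∀ k, x k ≤ y k := fun k => Finset.le_sup (Finset.mem_range.2 k.lt_succ_self)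
    obtain ⟨B, hBinf, p, hconv⟩ := H 1 le_rfl (fun s => ⟨y (sInf (↑s : Set ℕ)), hylt _⟩)
    have hsucc : p.1 + 1 < γ := by
      rw [Ordinal.add_one_eq_succ]
      exact hlim.succ_lt p.2
    have hpq : p < (⟨p.1 + 1, hsucc⟩ : Set.Iio γ) := by
      exact Subtype.mk_lt_mk.2 (by rw [Ordinal.add_one_eq_succ]; exact Order.lt_succ _)
    obtain ⟨F', hF'⟩ := hconv (Set.Iio ⟨p.1 + 1, hsucc⟩) ((isOpen_Iio).mem_nhds hpq)
    obtain ⟨k₁, hk₁⟩ := hxcof (p.1 + 1) hsucc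
    have : (B \ (↑F' ∪ Set.Iio k₁)).Infinite :=
      hBinf.diff ((F'.finite_toSet).union (Set.finite_Iio _))
    obtain ⟨k, hk⟩ := this.nonempty
    simp only [Set.mem_diff, Set.mem_union, Set.mem_Iio, not_or, not_lt] at hk
    have hmem : ↑({k} : Finset ℕ) ⊆ B \ ↑F' := by
      intro z hz
      simp only [Finset.coe_singleton, Set.mem_singleton_iff] at hz
      subst hz
      exact ⟨hk.1, hk.2.1⟩
    have := hF' {k} (Finset.card_singleton k) hmem
    simp only [Finset.coe_singleton, csInf_singleton] at this
    replace this : y k < p.1 + 1 := this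
    have hge : p.1 + 1 ≤ y k := le_trans hk₁ (le_trans (hyx k₁) (hymono hk.2.2))
    exact absurd this (not_lt.2 hge)
  · -- if cof γ ≠ ω then n-seq compact for all n ≥ 1
    intro hcof n hn f
    by_cases hγ0 : γ = 0
    · exact ((zero_le (a := (f ∅).1)).not_gt
        (lt_of_lt_of_le (Set.mem_Iio.1 (f ∅).2) (le_of_eq hγ0))).elim
    have hγpos : (0 : Ordinal) < γ := pos_iff_ne_zero.2 hγ0
    set f' : Finset ℕ → Ordinal := fun s => (f s).1 with hf'_def
    -- bound the range
    have hbound : ∃ β < γ, ∀ s, f' s ≤ β := by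
      rcases Ordinal.zero_or_succ_or_isSuccLimit γ with h | ⟨a, h⟩ | hlim
      · exact absurd h hγ0
      · refine ⟨a, by rw [← h]; exact Order.lt_succ a, fun s => Order.lt_succ_iff.1 ?_⟩
        rw [h]
        exact (f s).2
      · refine ⟨Ordinal.lsub f', ?_, fun s => (Ordinal.lt_lsub f' s).le⟩
        refine Ordinal.lsub_lt_ord_lift ?_ (fun s => (f s).2)
        refine lt_of_le_of_lt (le_trans (Cardinal.lift_le.2 Cardinal.mk_le_aleph0)
          (le_of_eq Cardinal.lift_aleph0)) ((Ordinal.aleph0_le_cof.2 hlim).lt_of_ne (Ne.symm hcof))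
    obtain ⟨β, hβγ, hβ⟩ := hbound
    have hβ1 : β < β + 1 := by rw [Ordinal.add_one_eq_succ]; exact Order.lt_succ β
    set Sset : Set Ordinal := {δ | ∃ B : Set ℕ, B.Infinite ∧
      ∀ s : Finset ℕ, s.card = n → ↑s ⊆ B → f' s < δ} with hS_def
    have hSne : Sset.Nonempty := ⟨β + 1, Set.univ, Set.infinite_univ, fun s _ _ =>
      lt_of_le_of_lt (hβ s) hβ1⟩
    set δ₀ : Ordinal := Ordinal.lt_wf.min Sset hSne with hδ_def
    have hδmem : δ₀ ∈ Sset := Ordinal.lt_wf.min_mem Sset hSne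
    have hmin : ∀ η, η < δ₀ → η ∉ Sset := fun η hη hmem =>
      Ordinal.lt_wf.not_lt_min Sset hmem hη
    have hmemS : β + 1 ∈ Sset := ⟨Set.univ, Set.infinite_univ, fun s _ _ =>
      lt_of_le_of_lt (hβ s) hβ1⟩
    have hδle : δ₀ ≤ β + 1 := Ordinal.lt_wf.min_le hmemS
    have hδleγ : δ₀ ≤ γ := le_trans hδle
      (by rw [Ordinal.add_one_eq_succ]; exact Order.succ_le_of_lt hβγ)
    obtain ⟨B₀, hB₀inf, hB₀⟩ := hδmem
    have hδpos : 0 < δ₀ := by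
      obtain ⟨s, hs1, hs2⟩ := hB₀inf.exists_subset_card_eq n
      exact lt_of_le_of_lt zero_le (hB₀ s hs2 hs1)
    rcases Ordinal.zero_or_succ_or_isSuccLimit δ₀ with h0 | ⟨η, hsucc⟩ | hlimδ
    · exact absurd h0 (ne_of_gt hδpos)
    · -- successor case: eventually constant
      obtain ⟨B', hB'sub, hB'inf, bb, hmono⟩ :=
        ramsey_two n (fun s => decide (f' s = η)) B₀ hB₀inf
      have hηδ : η < δ₀ := by rw [← hsucc]; exact Order.lt_succ η
      cases bb with
      | false =>
        exact absurd (show η ∈ Sset from ⟨B', hB'inf, fun s hc hsub => by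
          have h1 : f' s < δ₀ := hB₀ s hc (fun x hx => hB'sub (hsub hx))
          have h2 : ¬(f' s = η) := of_decide_eq_false (hmono s hc hsub)
          rw [← hsucc] at h1
          exact lt_of_le_of_ne (Order.lt_succ_iff.1 h1) h2⟩) (hmin η hηδ)
      | true =>
        refine ⟨B', hB'inf, ⟨η, lt_of_lt_of_le hηδ hδleγ⟩, ?_⟩
        · intro U hU
          refine ⟨∅, fun s hc hsub => ?_⟩
          have h2 : f' s = η := of_decide_eq_true (hmono s hc (fun x hx => (hsub hx).1))
          have : f s = ⟨η, lt_of_lt_of_le hηδ hδleγ⟩ := Subtype.ext h2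
          rw [this]
          exact mem_of_mem_nhds hU
    · -- limit case
      have hδγ : δ₀ < γ := by
        have hβδ : δ₀ ≤ β := by
          by_contra hc
          push_neg at hc
          have h1 := hlimδ.succ_lt hc
          rw [← Ordinal.add_one_eq_succ] at h1
          exact absurd (lt_of_lt_of_le h1 hδle) (lt_irrefl _)
        exact lt_of_le_of_lt hβδ hβγ
      have hTct : (f' '' {s : Finset ℕ | s.card = n ∧ ↑s ⊆ B₀}).Countable :=
        Set.Countable.image (Set.to_countable _) _
      have hTne : (f' '' {s : Finset ℕ | s.card = n ∧ ↑s ⊆ B₀}).Nonempty := by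
        obtain ⟨s, hs1, hs2⟩ := hB₀inf.exists_subset_card_eq n
        exact ⟨f' s, ⟨s, ⟨hs2, hs1⟩, rfl⟩⟩
      obtain ⟨t, ht⟩ := Set.Countable.exists_eq_range hTct hTne
      have htlt : ∀ k, t k < δ₀ := by
        intro k
        have hmem : t k ∈ f' '' {s : Finset ℕ | s.card = n ∧ ↑s ⊆ B₀} := by
          rw [ht]; exact ⟨k, rfl⟩
        obtain ⟨s, ⟨hs1, hs2⟩, hs3⟩ := hmem
        rw [← hs3]; exact hB₀ s hs1 hs2
      have hstep : ∀ (C : Set ℕ) (k : ℕ), ∃ C' : Set ℕ, C.Infinite →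
          (C'.Infinite ∧ C' ⊆ C ∧ ∀ s : Finset ℕ, s.card = n → ↑s ⊆ C' → t k ≤ f' s) := by
        intro C k
        by_cases hC : C.Infinite
        · obtain ⟨B', hB'sub, hB'inf, bb, hmono⟩ :=
            ramsey_two n (fun s => decide (f' s < t k)) C hC
          cases bb with
          | true =>
            exact absurd (show t k ∈ Sset from ⟨B', hB'inf, fun s hc hsub =>
              of_decide_eq_true (hmono s hc hsub)⟩) (hmin _ (htlt k))
          | false =>
            exact ⟨B', fun _ => ⟨hB'inf, hB'sub, fun s hc hsub =>
              not_lt.1 (of_decide_eq_false (hmono s hc hsub))⟩⟩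
        · exact ⟨∅, fun h => absurd h hC⟩
      choose fC hfC using hstep
      set g : ℕ → Set ℕ := fun k => Nat.rec B₀ (fun k C => fC C k) k with hg_def
      have gsucc : ∀ k, g (k+1) = fC (g k) k := fun k => rfl
      have ginf : ∀ k, (g k).Infinite ∧ g k ⊆ B₀ := by
        intro k
        induction k with
        | zero => exact ⟨hB₀inf, le_refl _⟩
        | succ k ihk =>
          obtain ⟨h1, h2, h3⟩ := hfC (g k) k ihk.1
          rw [gsucc]
          exact ⟨h1, h2.trans ihk.2⟩
      have gprop : ∀ k, ∀ s : Finset ℕ, s.card = n → ↑s ⊆ g (k+1) → t k ≤ f' s :=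
        fun k => (hfC (g k) k (ginf k).1).2.2
      have gchain : ∀ j k, k ≤ j → g j ⊆ g k := by
        intro j
        induction j with
        | zero => intro k hk; rw [Nat.le_zero.1 hk]
        | succ j ihj =>
          intro k hk
          rcases Nat.eq_or_lt_of_le hk with h | h
          · rw [h]
          · exact ((hfC (g j) j (ginf j).1).2.1).trans (ihj k (Nat.lt_succ_iff.1 h))
      have hbstep : ∀ (x k : ℕ), ∃ y, y ∈ g k ∧ x < y := by
        intro x k
        obtain ⟨y, hy1, hy2⟩ := (ginf k).1.exists_gt x
        exact ⟨y, hy1, hy2⟩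
      choose fB hfB1 hfB2 using hbstep
      set b : ℕ → ℕ := fun k => Nat.rec (fB 0 0) (fun k x => fB x (k+1)) k with hb_def
      have hbmem : ∀ k, b k ∈ g k := by
        intro k
        cases k with
        | zero => exact hfB1 0 0
        | succ k => exact hfB1 (b k) (k+1)
      have hbmono : StrictMono b :=
        strictMono_nat_of_lt_succ (fun k => hfB2 (b k) (k+1))
      refine ⟨Set.range b, Set.infinite_range_of_injective hbmono.injective, ⟨δ₀, hδγ⟩, ?_⟩
      intro U hU
      obtain ⟨l, hl, hIoc⟩ := exists_Ioc_subset_of_mem_nhds hU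
        ⟨⟨0, hγpos⟩, Subtype.mk_lt_mk.2 hδpos⟩
      have hlδ : l.1 < δ₀ := Subtype.coe_lt_coe.2 hl
      have hex : ∃ k, l.1 < t k := by
        by_contra hc
        push_neg at hc
        have hmem : l.1 + 1 ∈ Sset := ⟨B₀, hB₀inf, fun s hcard hsub => by
          have : f' s ∈ f' '' {s : Finset ℕ | s.card = n ∧ ↑s ⊆ B₀} :=
            ⟨s, ⟨hcard, hsub⟩, rfl⟩
          rw [ht] at this
          obtain ⟨k', hk'⟩ := this
          rw [← hk']
          exact lt_of_le_of_lt (hc k') (by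
            rw [Ordinal.add_one_eq_succ]; exact Order.lt_succ _)⟩
        have hlt : l.1 + 1 < δ₀ := by
          rw [Ordinal.add_one_eq_succ]; exact hlimδ.succ_lt hlδ
        exact absurd hmem (hmin _ hlt)
      obtain ⟨k, hk⟩ := hex
      refine ⟨Finset.image b (Finset.range (k+1)), fun s hcard hsub => ?_⟩
      have hsg : ↑s ⊆ g (k+1) := by
        intro x hx
        obtain ⟨hx1, hx2⟩ := hsub hx
        obtain ⟨j, rfl⟩ := hx1
        have hj : k + 1 ≤ j := by
          by_contra hcj
          push_neg at hcj
          exact hx2 (Finset.mem_coe.2 (Finset.mem_image.2 ⟨j, Finset.mem_range.2 hcj, rfl⟩))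
        exact gchain j (k+1) hj (hbmem j)
      have h1 : t k ≤ f' s := gprop k s hcard hsg
      have h2 : f' s < δ₀ := hB₀ s hcard (fun x hx => (ginf (k+1)).2 (hsg hx))
      exact hIoc ⟨Subtype.coe_lt_coe.1 (lt_of_lt_of_le hk h1), Subtype.coe_le_coe.1 h2.le⟩
end

section
/- Every sequentially compact space in which the closure of every countable set is first countable is n-sequentially compact for all n ≥ 1, given that every sequentially compact first countable space is n-sequentially compact for all n ≥ 1. -/
open Set Topology

section

variable {X Y : Type*} [TopologicalSpace X] [TopologicalSpace Y]

theorem IsSeqClosed.isSeqCompact [SeqCompactSpace X] {s : Set X} (hs : IsSeqClosed s) :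
    IsSeqCompact s := fun x hx ↦
  let ⟨a, φ, hφ, hlim⟩ := SeqCompactSpace.tendsto_subseq x
  ⟨a, hs (fun k ↦ hx (φ k)) hlim, φ, hφ, hlim⟩

instance seqCompactSpace_closure [SeqCompactSpace X] (S : Set X) :
    SeqCompactSpace (closure S) :=
  isSeqCompact_iff_seqCompactSpace.mp isClosed_closure.isSeqClosed.isSeqCompact

theorem ConvergesOn.map {n : ℕ} {B : Set ℕ} {f : Finset ℕ → X} {p : X} {g : X → Y}
    (hf : ConvergesOn n B f p) (hg : ContinuousAt g p) : ConvergesOn n B (g ∘ f) (g p) :=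
  fun _ hU ↦ hf _ (hg hU)

theorem nSeqCompact_of_forall_countable {n : ℕ}
    (hS : ∀ S : Set X, S.Countable → ∃ T, S ⊆ T ∧ NSeqCompact n T) : NSeqCompact n X := by
  intro f
  obtain ⟨T, hsub, hT⟩ := hS (range f) (countable_range f)
  obtain ⟨B, hB, p, hp⟩ := hT fun s ↦ ⟨f s, hsub (mem_range_self s)⟩
  exact ⟨B, hB, p, hp.map continuous_subtype_val.continuousAt⟩

end

/-- Assuming that every sequentially compact first countable space is `n`-sequentially
compact for every `n ≥ 1`, every sequentially compact space in which the closure of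
every countable set is first countable is `n`-sequentially compact for every `n ≥ 1`. -/
theorem nSeqCompact_of_countable_closure_firstCountable
    (h : ∀ (Y : Type u) [TopologicalSpace Y], SeqCompactSpace Y →
      FirstCountableTopology Y → ∀ n : ℕ, 1 ≤ n → NSeqCompact n Y)
    (X : Type u) [TopologicalSpace X] (hX : SeqCompactSpace X)
    (hc : ∀ S : Set X, S.Countable → FirstCountableTopology (closure S)) :
    ∀ n : ℕ, 1 ≤ n → NSeqCompact n X := fun n hn ↦
  nSeqCompact_of_forall_countable fun S hS ↦
    ⟨closure S, subset_closure, h _ (seqCompactSpace_closure S) (hc S hS) n hn⟩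
end

section
/- If X is an (n+1)-sequentially compact topological space, then X is n-sequentially compact. -/
/-!
Given `f : [ω]^n → X`, apply `(n+1)`-sequential compactness to `s ↦ f (s \ {max s})`.
If this converges to `p` on `[B]^(n+1)`, then so does `f` on `[B]^n`: past any finite `F`, an
`n`-set `s ⊆ B \ F` is `t \ {max t}` for `t = s ∪ {m}` with `m ∈ B \ F` above `max s`.
-/

theorem Finset.notMem_of_sup_id_lt {α : Type*} [LinearOrder α] [OrderBot α]
    {s : Finset α} {m : α} (hm : s.sup id < m) : m ∉ s :=
  fun h => (Finset.le_sup (f := id) h).not_gt hm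

theorem Finset.erase_sup_insert_of_sup_lt {α : Type*} [LinearOrder α] [OrderBot α]
    {s : Finset α} {m : α} (hm : s.sup id < m) :
    (insert m s).erase ((insert m s).sup id) = s := by
  rw [Finset.sup_insert, id, max_eq_left hm.le, Finset.erase_insert (notMem_of_sup_id_lt hm)]

theorem ConvergesOn.of_comp_erase_sup {X : Type*} [TopologicalSpace X] {n : ℕ} {B : Set ℕ}
    {f : Finset ℕ → X} {p : X} (hB : B.Infinite)
    (h : ConvergesOn (n + 1) B (fun t => f (t.erase (t.sup id))) p) :
    ConvergesOn n B f p := by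
  intro U hU
  obtain ⟨F, hF⟩ := h U hU
  refine ⟨F, fun s hcard hsub => ?_⟩
  obtain ⟨m, hmBF, hm⟩ := (hB.sdiff F.finite_toSet).exists_gt (s.sup id)
  have hcard' : (insert m s).card = n + 1 := by
    rw [Finset.card_insert_of_notMem (Finset.notMem_of_sup_id_lt hm), hcard]
  have hsub' : ↑(insert m s) ⊆ B \ ↑F := by
    rw [Finset.coe_insert]
    exact Set.insert_subset hmBF hsub
  simpa only [Finset.erase_sup_insert_of_sup_lt hm] using hF (insert m s) hcard' hsub'

/-- If `X` is `(n+1)`-sequentially compact then `X` is `n`-sequentially compact. -/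
theorem nSeqCompact_of_succ {X : Type*} [TopologicalSpace X] (n : ℕ)
    (h : NSeqCompact (n + 1) X) : NSeqCompact n X := by
  intro f
  obtain ⟨B, hB, p, hp⟩ := h fun t => f (t.erase (t.sup id))
  exact ⟨B, hB, p, hp.of_comp_erase_sup hB⟩
end

section
/- For every family H of subsets of ω^{n+1} with each member in FIN^{n+1} and |H| < 𝔟, and every infinite B ⊆ ω, there exists a block sequence A ⊆ B^{n+1} (viewing elements as strictly increasing (n+1)-tuples) such that A ∩ X is finite for every X ∈ H. -/
/-!
Every `X ∈ FIN^(n+1)` is avoided by all tuples growing faster than some `f_X`. By induction on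
`n`: the initial segment of a fast tuple lies outside the set of tuples with infinite fibre, so
its last entry only has to beat the finitely many fibre bounds of tuples below it. Fewer than `𝔟`
functions `f_X` are all `≤*` a single `g`; cutting an increasing sequence in `B` that outruns `g`
into consecutive blocks gives a block sequence whose blocks are eventually `f_X`-fast for each `X`.
-/

/-- `f ≤* g` : eventual domination. -/
def LeStar (f g : ℕ → ℕ) : Prop := {n | g n < f n}.Finite

/-- The bounding number 𝔟. -/
noncomputable def bNumber : Cardinal :=
  sInf {c | ∃ F : Set (ℕ → ℕ), Cardinal.mk F = c ∧ ∀ g : ℕ → ℕ, ∃ f ∈ F, ¬ LeStar f g}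

/-- `FINpow n` is the Fubini power `FIN^(n+1)`, an ideal on `ω^(n+1)`. -/
def FINpow : (n : ℕ) → Set (Set (Fin (n + 1) → ℕ))
  | 0 => {A | A.Finite}
  | n + 1 => {A | {s : Fin (n + 1) → ℕ | {m : ℕ | Fin.snoc s m ∈ A}.Infinite} ∈ FINpow n}

/-- A block sequence of strictly increasing `(n+1)`-tuples. -/
def IsBlockSeq {n : ℕ} (a : ℕ → (Fin (n + 1) → ℕ)) : Prop :=
  (∀ m, StrictMono (a m)) ∧ ∀ m, a m (Fin.last n) < a (m + 1) 0

open Filter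

def IsFastTuple (f : ℕ → ℕ) {n : ℕ} (s : Fin (n + 1) → ℕ) : Prop :=
  StrictMono s ∧ f 0 ≤ s 0 ∧ ∀ i : Fin n, f (s i.castSucc) < s i.succ

namespace IsFastTuple

variable {f g : ℕ → ℕ} {n : ℕ}

lemma mono {s : Fin (n + 1) → ℕ} (hfg : f ≤ g) (h : IsFastTuple g s) : IsFastTuple f s :=
  ⟨h.1, (hfg 0).trans h.2.1, fun i => (hfg _).trans_lt (h.2.2 i)⟩

lemma init {s : Fin (n + 2) → ℕ} (h : IsFastTuple f s) : IsFastTuple f (Fin.init s) := by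
  refine ⟨h.1.comp Fin.strictMono_castSucc, h.2.1, fun i => ?_⟩
  have := h.2.2 i.castSucc
  rwa [Fin.succ_castSucc] at this

end IsFastTuple

lemma exists_forall_isFastTuple_notMem :
    ∀ {n : ℕ} {X : Set (Fin (n + 1) → ℕ)}, X ∈ FINpow n →
      ∃ f : ℕ → ℕ, ∀ s, IsFastTuple f s → s ∉ X
  | 0, X, hX => by
    obtain ⟨N, hN⟩ := (Set.Finite.image (fun s => s 0) hX).bddAbove
    refine ⟨fun _ => N + 1, fun s hs hsX => ?_⟩
    have hle : s 0 ≤ N := hN ⟨s, hsX, rfl⟩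
    have hgt : N + 1 ≤ s 0 := hs.2.1
    omega
  | n + 1, X, hX => by
    obtain ⟨f₀, hf₀⟩ := exists_forall_isFastTuple_notMem
      (X := {s | {m | Fin.snoc s m ∈ X}.Infinite}) hX
    -- junk `0` on infinite fibres, which the fast tuples never meet
    let fiberBound : (Fin (n + 1) → ℕ) → ℕ := fun s => sSup {m | Fin.snoc s m ∈ X}
    refine ⟨fun t => max (f₀ t)
      ((Fintype.piFinset fun _ => Finset.range (t + 1)).sup fiberBound), fun s hs hsX => ?_⟩
    set t := s (Fin.last n).castSucc
    have hfiber : {m | Fin.snoc (Fin.init s) m ∈ X}.Finite :=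
      Set.not_infinite.1 (hf₀ _ (hs.init.mono fun k => le_max_left _ _))
    have hlast : s (Fin.last (n + 1)) ≤ fiberBound (Fin.init s) :=
      le_csSup hfiber.bddAbove (by simpa [Fin.snoc_init_self])
    have hinit : Fin.init s ∈ Fintype.piFinset fun _ => Finset.range (t + 1) :=
      Fintype.mem_piFinset.2 fun i => Finset.mem_range_succ_iff.2
        (hs.1.monotone (Fin.castSucc_le_castSucc_iff.2 (Fin.le_last i)))
    have hfast : max (f₀ t) _ < s (Fin.last n).succ := hs.2.2 (Fin.last n)
    rw [Fin.succ_last] at hfast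
    exact (hlast.trans (Finset.le_sup hinit)).not_gt ((le_max_right _ _).trans_lt hfast)

lemma exists_forall_leStar_of_mk_lt_bNumber {F : Set (ℕ → ℕ)} (hF : Cardinal.mk F < bNumber) :
    ∃ g, ∀ f ∈ F, LeStar f g := by
  by_contra! hunbounded
  exact hF.not_ge (csInf_le (OrderBot.bddBelow _) ⟨F, rfl, hunbounded⟩)

lemma LeStar.eventually_le {f g : ℕ → ℕ} (h : LeStar f g) :
    ∀ᶠ k in atTop, f k ≤ g k := by
  rw [← Nat.cofinite_eq_atTop, eventually_cofinite]
  simpa [LeStar] using h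

lemma Set.Infinite.exists_strictMono_mem_apply_lt_succ {B : Set ℕ} (hB : B.Infinite)
    (g : ℕ → ℕ) :
    ∃ b : ℕ → ℕ, (∀ j, b j ∈ B) ∧ StrictMono b ∧ ∀ j, g (b j) < b (j + 1) := by
  choose c hcB hc using fun N => hB.exists_gt N
  refine ⟨fun j => Nat.rec (c 0) (fun _ p => c (max p (g p))) j, fun j => ?_,
    strictMono_nat_of_lt_succ fun j => (max_lt_iff.1 (hc _)).1, fun j => (max_lt_iff.1 (hc _)).2⟩
  cases j <;> apply hcB

def blocks (b : ℕ → ℕ) (n m : ℕ) : Fin (n + 1) → ℕ := fun i => b (m * (n + 1) + i)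

lemma isBlockSeq_blocks {b : ℕ → ℕ} (hb : StrictMono b) (n : ℕ) :
    IsBlockSeq (blocks b n) := by
  refine ⟨fun m i j hij => hb (by simpa using hij), fun m => hb ?_⟩
  simp only [Fin.val_last, Fin.val_zero]
  nlinarith

lemma eventually_isFastTuple_blocks {b : ℕ → ℕ} {f g : ℕ → ℕ} (hb : StrictMono b)
    (hbg : ∀ j, g (b j) < b (j + 1)) (hfg : LeStar f g) (n : ℕ) :
    ∀ᶠ m in atTop, IsFastTuple f (blocks b n m) := by
  obtain ⟨K, hK⟩ := eventually_atTop.1 hfg.eventually_le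
  have hb_atTop : Tendsto (fun m => b (m * (n + 1))) atTop atTop :=
    hb.tendsto_atTop.comp (tendsto_id.atTop_mul_const' (Nat.succ_pos n))
  filter_upwards [hb_atTop.eventually_ge_atTop (f 0), hb_atTop.eventually_ge_atTop K]
    with m h0 hKm
  refine ⟨(isBlockSeq_blocks hb n).1 m, h0, fun i => ?_⟩
  have hKi : K ≤ b (m * (n + 1) + i) := hKm.trans (hb.monotone (Nat.le_add_right _ _))
  calc f (b (m * (n + 1) + i)) ≤ g (b (m * (n + 1) + i)) := hK _ hKi
    _ < b (m * (n + 1) + (i + 1)) := hbg _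

/-- For every family `H ⊆ FIN^(n+1)` of size `< 𝔟` and every infinite `B ⊆ ω`,
there is a block sequence inside `B^(n+1)` almost disjoint from every member of `H`. -/
theorem blockSeq_avoiding_small_family (n : ℕ)
    (H : Set (Set (Fin (n + 1) → ℕ))) (hH : H ⊆ FINpow n)
    (hsmall : Cardinal.mk H < bNumber)
    (B : Set ℕ) (hB : B.Infinite) :
    ∃ a : ℕ → (Fin (n + 1) → ℕ), IsBlockSeq a ∧
      (∀ m, ∀ i, a m i ∈ B) ∧
      ∀ X ∈ H, (Set.range a ∩ X).Finite := by
  choose f hf using fun X : H => exists_forall_isFastTuple_notMem (hH X.2)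
  obtain ⟨g, hg⟩ := exists_forall_leStar_of_mk_lt_bNumber (Cardinal.mk_range_le.trans_lt hsmall)
  obtain ⟨b, hbB, hb, hbg⟩ := hB.exists_strictMono_mem_apply_lt_succ g
  refine ⟨blocks b n, isBlockSeq_blocks hb n, fun m i => hbB _, fun X hX => ?_⟩
  have hfast := eventually_isFastTuple_blocks hb hbg (hg _ ⟨⟨X, hX⟩, rfl⟩) n
  rw [← Nat.cofinite_eq_atTop, eventually_cofinite] at hfast
  refine (hfast.image (blocks b n)).subset ?_
  rintro _ ⟨⟨m, rfl⟩, hmX⟩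
  exact ⟨m, fun hm => hf _ _ hm hmX, rfl⟩
end

section
/- The covering number cov*(FIN^{n+1}) equals 𝔟 for every n ≥ 1. -/
def bSet : Set Cardinal :=
  {c | ∃ F : Set (ℕ → ℕ), Cardinal.mk F = c ∧ ∀ g : ℕ → ℕ, ∃ f ∈ F, ¬ LeStar f g}

lemma bNumber_eq : bNumber = sInf bSet := rfl

lemma bSet_nonempty : bSet.Nonempty := by
  refine ⟨_, Set.univ, rfl, fun g => ⟨fun n => g n + 1, trivial, ?_⟩⟩
  intro h
  have h2 : {n | g n < (fun n => g n + 1) n} = Set.univ := by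
    ext n; simp
  rw [LeStar, h2] at h
  exact Set.infinite_univ h

lemma aleph0_le_of_mem_bSet {c : Cardinal} (hc : c ∈ bSet) : Cardinal.aleph0 ≤ c := by
  obtain ⟨F, rfl, hF⟩ := hc
  by_contra h
  push_neg at h
  rw [Cardinal.lt_aleph0_iff_set_finite] at h
  set g : ℕ → ℕ := fun n => h.toFinset.sup (fun f => f n) with hg
  obtain ⟨f, hfF, hf⟩ := hF g
  apply hf
  have : {n | g n < f n} = ∅ := by
    ext n
    simp only [Set.mem_setOf_eq, Set.mem_empty_iff_false, iff_false, not_lt, hg]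
    exact Finset.le_sup (f := fun f => f n) (h.mem_toFinset.2 hfF)
  rw [LeStar, this]
  exact Set.finite_empty

lemma aleph0_le_bNumber : Cardinal.aleph0 ≤ bNumber :=
  le_csInf bSet_nonempty fun _ hc => aleph0_le_of_mem_bSet hc

lemma bNumber_mem : bNumber ∈ bSet := csInf_mem bSet_nonempty

lemma exists_dominating {F : Set (ℕ → ℕ)} (h : Cardinal.mk F < bNumber) :
    ∃ g : ℕ → ℕ, ∀ f ∈ F, LeStar f g := by
  by_contra hc
  push_neg at hc
  have : Cardinal.mk F ∈ bSet := ⟨F, rfl, fun g => by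
    obtain ⟨f, hf1, hf2⟩ := hc g; exact ⟨f, hf1, hf2⟩⟩
  exact absurd (csInf_le (OrderBot.bddBelow _) this) (not_le.2 h)

/-- monotone majorant -/
def mono (f : ℕ → ℕ) : ℕ → ℕ := fun n => (Finset.range (n+1)).sup f

lemma mono_mono (f : ℕ → ℕ) : Monotone (mono f) := fun a b hab =>
  Finset.sup_mono (Finset.range_subset_range.2 (by omega))

lemma le_mono (f : ℕ → ℕ) (n : ℕ) : f n ≤ mono f n :=
  Finset.le_sup (Finset.mem_range.2 (by omega))

lemma exists_unbounded_mono {F : Set (ℕ → ℕ)}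
    (hF : ∀ g : ℕ → ℕ, ∃ f ∈ F, ¬ LeStar f g) (g : ℕ → ℕ) :
    ∃ f ∈ F, {n | g n < mono f n}.Infinite := by
  obtain ⟨f, hfF, hf⟩ := hF (mono g)
  rw [LeStar, ← Set.not_infinite, not_not] at hf
  refine ⟨f, hfF, hf.mono fun n hn => ?_⟩
  simp only [Set.mem_setOf_eq] at *
  exact lt_of_le_of_lt (le_mono g n) (lt_of_lt_of_le hn (le_mono f n))

lemma snoc_inj {n : ℕ} (s : Fin (n+1) → ℕ) :
    Function.Injective (fun m : ℕ => (Fin.snoc s m : Fin (n+2) → ℕ)) := by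
  intro a b h
  have := congrArg (fun t => t (Fin.last _)) h
  simpa using this

lemma mem_FINpow_succ {n : ℕ} (A : Set (Fin (n+2) → ℕ)) :
    A ∈ FINpow (n+1) ↔
      {s : Fin (n+1) → ℕ | {m : ℕ | Fin.snoc s m ∈ A}.Infinite} ∈ FINpow n := Iff.rfl

lemma finite_mem_FINpow : ∀ (n : ℕ) (A : Set (Fin (n+1) → ℕ)), A.Finite → A ∈ FINpow n := by
  intro n
  induction n with
  | zero => intro A hA; exact hA
  | succ n ih =>
    intro A hA
    rw [mem_FINpow_succ]
    have : {s : Fin (n+1) → ℕ | {m : ℕ | Fin.snoc s m ∈ A}.Infinite} = ∅ := by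
      ext s
      simp only [Set.mem_setOf_eq, Set.mem_empty_iff_false, iff_false, Set.not_infinite]
      exact hA.preimage ((snoc_inj s).injOn)
    rw [this]
    exact ih ∅ Set.finite_empty

/-- Key lower-bound lemma: a small subfamily of `FINpow n` fails to cover. -/
lemma exists_avoid : ∀ (n : ℕ) (H : Set (Set (Fin (n+1) → ℕ))), H ⊆ FINpow n →
    Cardinal.mk H < bNumber →
    ∃ A : Set (Fin (n+1) → ℕ), A.Infinite ∧ ∀ X ∈ H, (A ∩ X).Finite := by
  intro n
  induction n with
  | zero =>
    intro H hH _
    exact ⟨Set.univ, Set.infinite_univ, fun X hX => (hH hX).subset Set.inter_subset_right⟩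
  | succ n ih =>
    intro H hH hcard
    set S : Set (Fin (n+2) → ℕ) → Set (Fin (n+1) → ℕ) :=
      fun X => {s | {m : ℕ | Fin.snoc s m ∈ X}.Infinite} with hS
    have hH' : S '' H ⊆ FINpow n := by
      rintro _ ⟨X, hX, rfl⟩
      exact hH hX
    have hcard' : Cardinal.mk (S '' H) < bNumber :=
      lt_of_le_of_lt (Cardinal.mk_image_le) hcard
    obtain ⟨A', hA'inf, hA'⟩ := ih (S '' H) hH' hcard'
    set σ : ℕ → (Fin (n+1) → ℕ) := fun k => ((Set.Infinite.natEmbedding A' hA'inf) k : _) with hσ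
    have hσinj : Function.Injective σ := fun a b h =>
      (Set.Infinite.natEmbedding A' hA'inf).injective (Subtype.ext h)
    have hσA' : ∀ k, σ k ∈ A' := fun k => ((Set.Infinite.natEmbedding A' hA'inf) k).2
    -- functions to dominate
    set f : Set (Fin (n+2) → ℕ) → ℕ → ℕ := fun X k =>
      sSup {m : ℕ | Fin.snoc (σ k) m ∈ X} + 1 with hf
    have hfcard : Cardinal.mk ((fun X => f X) '' H) < bNumber :=
      lt_of_le_of_lt (Cardinal.mk_image_le) hcard
    obtain ⟨g, hg⟩ := exists_dominating hfcard
    refine ⟨Set.range (fun k => (Fin.snoc (σ k) (g k) : Fin (n+2) → ℕ)), ?_, ?_⟩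
    · apply Set.infinite_range_of_injective
      intro a b h
      have h2 : Fin.init (Fin.snoc (σ a) (g a) : Fin (n+2) → ℕ) =
          Fin.init (Fin.snoc (σ b) (g b) : Fin (n+2) → ℕ) := congrArg Fin.init h
      rw [Fin.init_snoc, Fin.init_snoc] at h2
      exact hσinj h2
    · intro X hXH
      have hK1 : {k | σ k ∈ S X}.Finite := by
        have : {k | σ k ∈ S X} ⊆ σ ⁻¹' (A' ∩ S X) := fun k hk => ⟨hσA' k, hk⟩
        exact ((hA' (S X) ⟨X, hXH, rfl⟩).preimage hσinj.injOn).subset this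
      have hK2 : {k | g k < f X k}.Finite := hg (f X) ⟨X, hXH, rfl⟩
      have key : (Set.range (fun k => (Fin.snoc (σ k) (g k) : Fin (n+2) → ℕ))) ∩ X ⊆
          (fun k => (Fin.snoc (σ k) (g k) : Fin (n+2) → ℕ)) ''
            ({k | σ k ∈ S X} ∪ {k | g k < f X k}) := by
        rintro t ⟨⟨k, rfl⟩, htX⟩
        refine ⟨k, ?_, rfl⟩
        by_contra hk
        simp only [Set.mem_union, Set.mem_setOf_eq, not_or, not_lt] at hk
        obtain ⟨hk1, hk2⟩ := hk
        have hfib : {m : ℕ | Fin.snoc (σ k) m ∈ X}.Finite := Set.not_infinite.1 hk1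
        have hmem : g k ∈ {m : ℕ | Fin.snoc (σ k) m ∈ X} := htX
        have : g k ≤ sSup {m : ℕ | Fin.snoc (σ k) m ∈ X} :=
          le_csSup hfib.bddAbove hmem
        simp only [hf] at hk2
        omega
      exact ((hK1.union hK2).image _).subset key

lemma snoc_one (s : Fin 1 → ℕ) (m : ℕ) : (Fin.snoc s m : Fin 2 → ℕ) 1 = m := by
  simp [Fin.snoc]

lemma snoc_zero (s : Fin 1 → ℕ) (m : ℕ) : (Fin.snoc s m : Fin 2 → ℕ) 0 = s 0 := by
  simp [Fin.snoc]

lemma exists_cover_one : ∃ H : Set (Set (Fin 2 → ℕ)), H ⊆ FINpow 1 ∧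
    Cardinal.mk H ≤ bNumber ∧
    ∀ A : Set (Fin 2 → ℕ), A.Infinite → ∃ X ∈ H, (A ∩ X).Infinite := by
  obtain ⟨F, hFmk, hFunb⟩ := bNumber_mem
  set Xf : (ℕ → ℕ) → Set (Fin 2 → ℕ) := fun f => {t | t 1 ≤ mono f (t 0)} with hXf
  set Ca : ℕ → Set (Fin 2 → ℕ) := fun a => {t | t 0 = a} with hCa
  refine ⟨(Xf '' F) ∪ (Ca '' Set.univ), ?_, ?_, ?_⟩
  · rintro _ (⟨f, hfF, rfl⟩ | ⟨a, -, rfl⟩)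
    · rw [mem_FINpow_succ]
      show Set.Finite _
      have he : {s : Fin 1 → ℕ | {m : ℕ | Fin.snoc s m ∈ Xf f}.Infinite} = ∅ := by
        ext s
        simp only [Set.mem_setOf_eq, Set.mem_empty_iff_false, iff_false, Set.not_infinite]
        apply (Set.finite_Iic (mono f (s 0))).subset
        intro m hm
        have : (Fin.snoc s m : Fin 2 → ℕ) 1 ≤ mono f ((Fin.snoc s m : Fin 2 → ℕ) 0) := hm
        rwa [snoc_one, snoc_zero] at this
      rw [he]
      exact Set.finite_empty
    · rw [mem_FINpow_succ]
      show Set.Finite _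
      apply (Set.finite_singleton (fun _ => a : Fin 1 → ℕ)).subset
      intro s hs
      obtain ⟨m, hm⟩ := (Set.Infinite.nonempty hs)
      have h0 : (Fin.snoc s m : Fin 2 → ℕ) 0 = a := hm
      rw [snoc_zero] at h0
      have : s = (fun _ => a : Fin 1 → ℕ) := by
        funext i
        rw [Subsingleton.elim i 0, h0]
      exact Set.mem_singleton_iff.2 this
  · apply le_trans (Cardinal.mk_union_le _ _)
    apply Cardinal.add_le_of_le aleph0_le_bNumber
    · exact le_trans Cardinal.mk_image_le (le_of_eq hFmk)
    · apply le_trans Cardinal.mk_image_le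
      apply le_trans (le_of_eq Cardinal.mk_univ)
      exact le_trans (le_of_eq Cardinal.mk_nat) aleph0_le_bNumber
  · intro A hA
    by_cases hc : ∃ a, (A ∩ Ca a).Infinite
    · obtain ⟨a, ha⟩ := hc
      exact ⟨Ca a, Or.inr ⟨a, trivial, rfl⟩, ha⟩
    · push_neg at hc
      have hfib : ∀ a, (A ∩ Ca a).Finite := fun a => hc a
      set P : Set ℕ := (fun t : Fin 2 → ℕ => t 0) '' A with hPdef
      have hP : P.Infinite := by
        intro hPf
        have hsub : A ⊆ ⋃ a ∈ P, (A ∩ Ca a) := fun t ht =>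
          Set.mem_biUnion ⟨t, ht, rfl⟩ ⟨ht, rfl⟩
        exact hA ((hPf.biUnion (fun a _ => hfib a)).subset hsub)
      set h : ℕ → ℕ := fun a => sSup ((fun t : Fin 2 → ℕ => t 1) '' (A ∩ Ca a)) with hh
      have hbound : ∀ t ∈ A, t 1 ≤ h (t 0) := fun t ht =>
        le_csSup (((hfib (t 0)).image _).bddAbove) ⟨t, ⟨ht, rfl⟩, rfl⟩
      have hα : ∀ k : ℕ, ∃ a, a ∈ P ∧ k ≤ a := by
        intro k
        obtain ⟨b, hbP, hkb⟩ := hP.exists_gt k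
        exact ⟨b, hbP, le_of_lt hkb⟩
      choose α hαP hαk using hα
      obtain ⟨f, hfF, hK⟩ := exists_unbounded_mono hFunb (fun k => h (α k))
      refine ⟨Xf f, Or.inl ⟨f, hfF, rfl⟩, ?_⟩
      intro hfin
      obtain ⟨N, hN⟩ : ∃ N, ∀ t ∈ A ∩ Xf f, t 0 ≤ N := by
        obtain ⟨N, hN⟩ := (hfin.image (fun t : Fin 2 → ℕ => t 0)).bddAbove
        exact ⟨N, fun t ht => hN ⟨t, ht, rfl⟩⟩
      obtain ⟨k, hkK, hkN⟩ := hK.exists_gt N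
      simp only [Set.mem_setOf_eq] at hkK
      obtain ⟨t, htA, ht0⟩ := hαP k
      have ht0' : t 0 = α k := ht0
      have h1 : t 1 ≤ h (α k) := by rw [← ht0']; exact hbound t htA
      have h2 : mono f k ≤ mono f (α k) := mono_mono f (hαk k)
      have hgoal : t 1 ≤ mono f (α k) := le_trans h1 (le_trans (le_of_lt hkK) h2)
      have htX : t ∈ Xf f := by
        show t 1 ≤ mono f (t 0)
        rw [show t 0 = α k from ht0']
        exact hgoal
      have hle : t 0 ≤ N := hN t ⟨htA, htX⟩
      have hlt : N < t 0 := by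
        rw [show t 0 = α k from ht0']
        exact lt_of_lt_of_le hkN (hαk k)
      exact absurd hle (not_le.2 hlt)

lemma exists_cover_step (n : ℕ)
    (IH : ∃ H : Set (Set (Fin (n+1) → ℕ)), H ⊆ FINpow n ∧ Cardinal.mk H ≤ bNumber ∧
      ∀ A : Set (Fin (n+1) → ℕ), A.Infinite → ∃ X ∈ H, (A ∩ X).Infinite) :
    ∃ H : Set (Set (Fin (n+2) → ℕ)), H ⊆ FINpow (n+1) ∧ Cardinal.mk H ≤ bNumber ∧
      ∀ A : Set (Fin (n+2) → ℕ), A.Infinite → ∃ X ∈ H, (A ∩ X).Infinite := by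
  obtain ⟨H, hHsub, hHmk, hHcov⟩ := IH
  set cyl : Set (Fin (n+1) → ℕ) → Set (Fin (n+2) → ℕ) := fun X => {t | Fin.init t ∈ X} with hcyl
  set vert : (Fin (n+1) → ℕ) → Set (Fin (n+2) → ℕ) := fun s => {t | Fin.init t = s} with hvert
  refine ⟨(cyl '' H) ∪ (vert '' Set.univ), ?_, ?_, ?_⟩
  · rintro _ (⟨X, hX, rfl⟩ | ⟨s₀, -, rfl⟩)
    · rw [mem_FINpow_succ]
      have he : {s : Fin (n+1) → ℕ | {m : ℕ | Fin.snoc s m ∈ cyl X}.Infinite} = X := by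
        ext s
        simp only [Set.mem_setOf_eq]
        constructor
        · intro hinf
          obtain ⟨m, hm⟩ := hinf.nonempty
          have h2 : Fin.init (Fin.snoc s m : Fin (n+2) → ℕ) ∈ X := hm
          rwa [Fin.init_snoc] at h2
        · intro hs
          have he2 : {m : ℕ | Fin.snoc s m ∈ cyl X} = Set.univ := by
            ext m
            simp only [Set.mem_setOf_eq, Set.mem_univ, iff_true]
            show Fin.init (Fin.snoc s m : Fin (n+2) → ℕ) ∈ X
            rwa [Fin.init_snoc]
          rw [he2]
          exact Set.infinite_univ
      rw [he]
      exact hHsub hX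
    · rw [mem_FINpow_succ]
      apply finite_mem_FINpow
      apply (Set.finite_singleton s₀).subset
      intro s hs
      obtain ⟨m, hm⟩ := (Set.Infinite.nonempty hs)
      have h2 : Fin.init (Fin.snoc s m : Fin (n+2) → ℕ) = s₀ := hm
      rw [Fin.init_snoc] at h2
      exact Set.mem_singleton_iff.2 h2
  · apply le_trans (Cardinal.mk_union_le _ _)
    apply Cardinal.add_le_of_le aleph0_le_bNumber
    · exact le_trans Cardinal.mk_image_le hHmk
    · apply le_trans Cardinal.mk_image_le
      apply le_trans (le_of_eq Cardinal.mk_univ)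
      exact le_trans (Cardinal.mk_le_aleph0) aleph0_le_bNumber
  · intro A hA
    by_cases hP : (Fin.init '' A).Infinite
    · obtain ⟨X, hXH, hXinf⟩ := hHcov _ hP
      refine ⟨cyl X, Or.inl ⟨X, hXH, rfl⟩, ?_⟩
      have hsub2 : (Fin.init '' A) ∩ X ⊆ Fin.init '' (A ∩ cyl X) := by
        rintro p ⟨⟨t, htA, rfl⟩, hpX⟩
        exact ⟨t, ⟨htA, hpX⟩, rfl⟩
      exact Set.Infinite.of_image _ (hXinf.mono hsub2)
    · rw [Set.not_infinite] at hP
      have hax : ∃ s ∈ Fin.init '' A, (A ∩ vert s).Infinite := by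
        by_contra hcon
        push_neg at hcon
        have hsub : A ⊆ ⋃ s ∈ (Fin.init '' A), (A ∩ vert s) := fun t ht =>
          Set.mem_biUnion ⟨t, ht, rfl⟩ ⟨ht, rfl⟩
        exact hA ((hP.biUnion (fun s hs => hcon s hs)).subset hsub)
      obtain ⟨s, -, hs⟩ := hax
      exact ⟨vert s, Or.inr ⟨s, trivial, rfl⟩, hs⟩

lemma exists_cover : ∀ n : ℕ, 1 ≤ n → ∃ H : Set (Set (Fin (n+1) → ℕ)), H ⊆ FINpow n ∧
    Cardinal.mk H ≤ bNumber ∧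
    ∀ A : Set (Fin (n+1) → ℕ), A.Infinite → ∃ X ∈ H, (A ∩ X).Infinite := by
  intro n
  induction n with
  | zero => intro h; omega
  | succ n ih =>
    intro _
    by_cases hn : 1 ≤ n
    · exact exists_cover_step n (ih hn)
    · have : n = 0 := by omega
      subst this
      exact exists_cover_one


/-- The star-covering number of a (tall) ideal `I`. -/
noncomputable def covStar {α : Type*} (I : Set (Set α)) : Cardinal :=
  sInf {c | ∃ H : Set (Set α), H ⊆ I ∧ Cardinal.mk H = c ∧
    ∀ A : Set α, A.Infinite → ∃ X ∈ H, (A ∩ X).Infinite}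

/-- `cov*(FIN^(n+1)) = 𝔟` for every `n ≥ 1`. -/
theorem covStar_FINpow_eq_b : ∀ n : ℕ, 1 ≤ n → covStar (FINpow n) = bNumber := by
  intro n hn
  obtain ⟨H, hsub, hmk, hcov⟩ := exists_cover n hn
  apply le_antisymm
  · exact le_trans (csInf_le (OrderBot.bddBelow _) ⟨H, hsub, rfl, hcov⟩) hmk
  · refine le_csInf ⟨_, H, hsub, rfl, hcov⟩ ?_
    rintro c ⟨H', hsub', rfl, hcov'⟩
    by_contra hlt
    push_neg at hlt
    obtain ⟨A, hAinf, hAfin⟩ := exists_avoid n H' hsub' hlt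
    obtain ⟨X, hXH', hXinf⟩ := hcov' A hAinf
    exact hXinf (hAfin X hXH')
end

section
/- The invariant (ω^ω, ω^ω, ≱*) is Borel Tukey equivalent to (𝒫, ω^ω, ⋡), where 𝒫 is the set of partial functions from ω to ω with infinite domain and f ⋡ g means {n ∈ dom(f) : f(n) < g(n)} is infinite. Consequently the diamond principles ◇(𝔟) and ◇(𝒫, ω^ω, ⋡) are equivalent. -/
/-- `Option ℕ` is a countable discrete space; its Borel σ-algebra is discrete. -/
instance : MeasurableSpace (Option ℕ) := ⊤

/-- The Polish space coding partial functions `ω → ω` with infinite domain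
(`none` codes "undefined"). -/
abbrev PartialFns : Type := {f : ℕ → Option ℕ // {n : ℕ | f n ≠ none}.Infinite}

/-- Borel Tukey reduction `(A,B,E) ≤_T^B (A',B',E')`: Borel maps `φ : A → A'` and
`ψ : B' → B` with `φ(a) E' b → a E ψ(b)`. -/
def BorelTukeyLE {A B A' B' : Type*} [MeasurableSpace A] [MeasurableSpace B]
    [MeasurableSpace A'] [MeasurableSpace B']
    (E : A → B → Prop) (E' : A' → B' → Prop) : Prop :=
  ∃ (φ : A → A') (ψ : B' → B), Measurable φ ∧ Measurable ψ ∧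
    ∀ a b, E' (φ a) b → E a (ψ b)

/-- `C` is club in `γ`: a subset of `γ`, unbounded in `γ` and closed under limits. -/
def IsClubIn (C : Set Ordinal) (γ : Ordinal) : Prop :=
  (∀ x ∈ C, x < γ) ∧
  (∀ α < γ, ∃ β ∈ C, α ≤ β) ∧
  (∀ α < γ, α ≠ 0 → (∀ β < α, ∃ ξ ∈ C, β < ξ ∧ ξ < α) → α ∈ C)

/-- `S` is stationary in `γ`: it meets every club. -/
def IsStationaryIn (S : Set Ordinal) (γ : Ordinal) : Prop :=
  ∀ C : Set Ordinal, IsClubIn C γ → (S ∩ C).Nonempty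

noncomputable def omega1 : Ordinal := (Cardinal.aleph 1).ord

/-- The parametrized diamond principle `◇(A,B,E)` for a Borel invariant: for every
Borel `F : 2^{<ω₁} → A` there is `g : ω₁ → B` guessing every `f ∈ 2^{ω₁}`
stationarily often. -/
def ParamDiamond {A B : Type*} [MeasurableSpace A] (E : A → B → Prop) : Prop :=
  ∀ F : (δ : Ordinal.{0}) → (Set.Iio δ → Bool) → A,
    (∀ δ, δ < omega1 → Measurable (F δ)) →
    ∃ g : Ordinal.{0} → B, ∀ f : Ordinal.{0} → Bool,
      IsStationaryIn {α | α < omega1 ∧ E (F α (fun β => f β.1)) (g α)} omega1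

/-- `f ≱* g`: `f` fails to eventually dominate `g`. -/
def NotGeStar (f g : ℕ → ℕ) : Prop := {n : ℕ | f n < g n}.Infinite

/-- `f ⋡ g` for a partial function `f`: `{n ∈ dom f : f n < g n}` is infinite. -/
def NotSucceq (f : PartialFns) (g : ℕ → ℕ) : Prop :=
  {n : ℕ | ∃ m : ℕ, f.1 n = some m ∧ m < g n}.Infinite

/-!
A total function is a partial function with full domain, which gives one reduction with `ψ = id`.
For the other, list the values of a partial function `f` along its domain `d₀ < d₁ < ⋯`, and
replace `g` by its running sums `ψ g k = ∑_{i ≤ k} g i`: since `dₙ ≥ n`, `f dₙ < g n` gives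
`f dₙ < ψ g dₙ`, and distinct `n` give distinct `dₙ`. Borel Tukey reductions transfer
parametrized diamonds downwards: compose the coloring with `φ` and the guess with `ψ`.
-/

section Measurability

variable {α : Type*} [MeasurableSpace α]

open Classical in
lemma measurable_nat_count {p : α → ℕ → Prop} (hp : ∀ k, MeasurableSet {a | p a k}) (n : ℕ) :
    Measurable fun a => Nat.count (p a) n := by
  induction n with
  | zero => simp only [Nat.count_zero, measurable_const]
  | succ n ih =>
    simp only [Nat.count_succ]
    exact ih.add (Measurable.ite (hp n) measurable_const measurable_const)

open Classical in
lemma measurable_nat_nth {p : α → ℕ → Prop} (hp : ∀ k, MeasurableSet {a | p a k})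
    (hinf : ∀ a, {k | p a k}.Infinite) (n : ℕ) :
    Measurable fun a => Nat.nth (p a) n := by
  refine measurable_to_countable' fun k => ?_
  have hpre : (fun a => Nat.nth (p a) n) ⁻¹' {k} = {a | p a k} ∩ {a | Nat.count (p a) k = n} := by
    ext a
    constructor
    · rintro rfl
      exact ⟨Nat.nth_mem_of_infinite (hinf a) n, Nat.count_nth_of_infinite (hinf a) n⟩
    · rintro ⟨hk, rfl⟩
      exact Nat.nth_count hk
  rw [hpre]
  exact (hp k).inter (measurable_nat_count hp k (measurableSet_singleton n))

lemma Measurable.apply_nat {β : Type*} [MeasurableSpace β] {F : α → ℕ → β} {N : α → ℕ}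
    (hF : ∀ k, Measurable fun a => F a k) (hN : Measurable N) :
    Measurable fun a => F a (N a) :=
  (measurable_from_prod_countable_left (f := fun x : α × ℕ => F x.1 x.2) hF).comp
    (measurable_id.prodMk hN)

end Measurability

def PartialFns.ofFun (f : ℕ → ℕ) : PartialFns :=
  ⟨fun n => some (f n), by simp [Set.infinite_univ]⟩

lemma PartialFns.measurable_ofFun : Measurable PartialFns.ofFun :=
  Measurable.subtype_mk <| measurable_pi_lambda _ fun n =>
    (measurable_from_top (f := some)).comp (measurable_pi_apply n)

lemma notSucceq_ofFun_iff {f g : ℕ → ℕ} : NotSucceq (PartialFns.ofFun f) g ↔ NotGeStar f g := by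
  simp [NotSucceq, NotGeStar, PartialFns.ofFun]

lemma borelTukeyLE_notGeStar_notSucceq : BorelTukeyLE NotGeStar NotSucceq :=
  ⟨PartialFns.ofFun, id, PartialFns.measurable_ofFun, measurable_id,
    fun _ _ h => notSucceq_ofFun_iff.1 h⟩

namespace PartialFns

lemma measurable_apply (k : ℕ) : Measurable fun f : PartialFns => f.1 k :=
  (measurable_pi_apply k).comp measurable_subtype_coe

noncomputable def domNth (f : PartialFns) (n : ℕ) : ℕ :=
  Nat.nth (fun k => f.1 k ≠ none) n

lemma domNth_strictMono (f : PartialFns) : StrictMono f.domNth :=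
  Nat.nth_strictMono f.2

lemma exists_apply_domNth_eq (f : PartialFns) (n : ℕ) : ∃ m, f.1 (f.domNth n) = some m :=
  Option.ne_none_iff_exists'.1 (Nat.nth_mem_of_infinite f.2 n)

lemma measurable_domNth (n : ℕ) : Measurable fun f : PartialFns => f.domNth n :=
  measurable_nat_nth (p := fun (f : PartialFns) k => f.1 k ≠ none)
    (fun k => measurableSet_setOfPred.2
      ((measurable_from_top (f := fun o : Option ℕ => o ≠ none)).comp (measurable_apply k)))
    (fun f => f.2) n

noncomputable def compress (f : PartialFns) (n : ℕ) : ℕ :=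
  (f.1 (f.domNth n)).getD 0

lemma measurable_compress : Measurable compress :=
  measurable_pi_lambda _ fun n =>
    Measurable.apply_nat (F := fun f k => (f.1 k).getD 0)
      (fun k => (measurable_from_top (f := fun o : Option ℕ => o.getD 0)).comp
        (measurable_apply k))
      (measurable_domNth n)

end PartialFns

def runningSum (g : ℕ → ℕ) (k : ℕ) : ℕ :=
  ∑ i ∈ Finset.range (k + 1), g i

lemma measurable_runningSum : Measurable runningSum :=
  measurable_pi_lambda _ fun _ => Finset.measurable_sum _ fun i _ => measurable_pi_apply i

lemma le_runningSum (g : ℕ → ℕ) {n k : ℕ} (h : n ≤ k) : g n ≤ runningSum g k :=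
  Finset.single_le_sum (fun _ _ => Nat.zero_le _) (Finset.mem_range.2 (Nat.lt_succ_of_le h))

lemma NotSucceq.of_notGeStar_compress {f : PartialFns} {g : ℕ → ℕ}
    (h : NotGeStar f.compress g) : NotSucceq f (runningSum g) := by
  refine (h.image f.domNth_strictMono.injective.injOn).mono ?_
  rintro _ ⟨n, hn, rfl⟩
  obtain ⟨m, hm⟩ := f.exists_apply_domNth_eq n
  have hmn : m < g n := by simpa [PartialFns.compress, hm] using hn
  exact ⟨m, hm, hmn.trans_le (le_runningSum g (f.domNth_strictMono.id_le n))⟩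

lemma borelTukeyLE_notSucceq_notGeStar : BorelTukeyLE NotSucceq NotGeStar :=
  ⟨PartialFns.compress, runningSum, PartialFns.measurable_compress, measurable_runningSum,
    fun _ _ => NotSucceq.of_notGeStar_compress⟩

lemma IsStationaryIn.mono {S T : Set Ordinal} {γ : Ordinal} (hST : S ⊆ T)
    (hS : IsStationaryIn S γ) : IsStationaryIn T γ := fun C hC =>
  (hS C hC).mono (Set.inter_subset_inter_left C hST)

lemma ParamDiamond.of_borelTukeyLE {A B A' B' : Type*} [MeasurableSpace A] [MeasurableSpace B]
    [MeasurableSpace A'] [MeasurableSpace B'] {E : A → B → Prop} {E' : A' → B' → Prop}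
    (hEE' : BorelTukeyLE E E') (hE' : ParamDiamond E') : ParamDiamond E := by
  obtain ⟨φ, ψ, hφ, -, hφψ⟩ := hEE'
  intro F hF
  obtain ⟨g, hg⟩ := hE' (fun δ s => φ (F δ s)) fun δ hδ => hφ.comp (hF δ hδ)
  exact ⟨ψ ∘ g, fun f => (hg f).mono fun _ h => ⟨h.1, hφψ _ _ h.2⟩⟩

/-- `(ω^ω, ω^ω, ≱*)` and `(𝒫, ω^ω, ⋡)` are Borel Tukey equivalent; consequently
`◇(𝔟) ≡ ◇(𝒫, ω^ω, ⋡)`. -/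
theorem borelTukey_equiv_and_diamond_equiv :
    (BorelTukeyLE NotGeStar NotSucceq ∧ BorelTukeyLE NotSucceq NotGeStar) ∧
    (ParamDiamond NotGeStar ↔ ParamDiamond NotSucceq) :=
  ⟨⟨borelTukeyLE_notGeStar_notSucceq, borelTukeyLE_notSucceq_notGeStar⟩,
    ParamDiamond.of_borelTukeyLE borelTukeyLE_notSucceq_notGeStar,
    ParamDiamond.of_borelTukeyLE borelTukeyLE_notGeStar_notSucceq⟩
end

section
/- 𝔰 ≤ μ₁, where μ₁ is the minimum size of an L₁-splitting family. -/
/-- `S` splits the infinite set `A`. -/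
def Splits (S A : Set ℕ) : Prop := (A ∩ S).Infinite ∧ (A \ S).Infinite

/-- A splitting family. -/
def IsSplittingFamily (𝒮 : Set (Set ℕ)) : Prop :=
  (∀ S ∈ 𝒮, S.Infinite) ∧ ∀ A : Set ℕ, A.Infinite → ∃ S ∈ 𝒮, Splits S A

/-- The splitting number 𝔰. -/
noncomputable def sNumber : Cardinal :=
  sInf {c | ∃ 𝒮 : Set (Set ℕ), IsSplittingFamily 𝒮 ∧ Cardinal.mk 𝒮 = c}

/-- `f : [ω]^n → ω^{n+1}` (values strictly increasing tuples) belongs to `L_n`: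
no restriction of `f` to the `n`-subsets of an infinite set has image inside a
single cone `C_s` with `s` nonempty. -/
def MemL (n : ℕ) (f : Finset ℕ → (Fin (n + 1) → ℕ)) : Prop :=
  (∀ s : Finset ℕ, s.card = n → StrictMono (f s)) ∧
  ¬ ∃ (X : Set ℕ) (m : ℕ) (_ : 1 ≤ m) (hm : m ≤ n + 1) (t : Fin m → ℕ),
      X.Infinite ∧ ∀ s : Finset ℕ, s.card = n → ↑s ⊆ X →
        ∀ i : Fin m, f s (Fin.castLE hm i) = t i

/-- `S` `L_n`-splits `f`. -/
def LSplits (n : ℕ) (S : Set ℕ) (f : Finset ℕ → (Fin (n + 1) → ℕ)) : Prop :=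
  ∃ X Y : Set ℕ, X.Infinite ∧ Y.Infinite ∧ Disjoint X Y ∧
    (∀ s : Finset ℕ, s.card = n → ↑s ⊆ X → ∀ i, f s i ∈ S) ∧
    (∀ s : Finset ℕ, s.card = n → ↑s ⊆ Y → ∀ i, f s i ∉ S)

/-- An `L_n`-splitting family. -/
def IsLSplittingFamily (n : ℕ) (𝒮 : Set (Set ℕ)) : Prop :=
  (∀ S ∈ 𝒮, S.Infinite) ∧
  ∀ f : Finset ℕ → (Fin (n + 1) → ℕ), MemL n f → ∃ S ∈ 𝒮, LSplits n S f

/-- `μ_n`, the least size of an `L_n`-splitting family. -/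
noncomputable def muNumber (n : ℕ) : Cardinal :=
  sInf {c | ∃ 𝒮 : Set (Set ℕ), IsLSplittingFamily n 𝒮 ∧ Cardinal.mk 𝒮 = c}


/-! Every `L₁`-splitting family is a splitting family: to split an infinite `A`, `L₁`-split the
map `k ↦ (a_k, a_{k+1})` built from the increasing enumeration `(a_k)` of `A`; its first
coordinates are injective and lie in `A`, so the two infinite sets witnessing the `L₁`-splitting
give infinitely many points of `A ∩ S` and of `A \ S`. Moreover `μ₁` is not the infimum of the
empty set: for `f ∈ L₁` choose singletons whose value pairs form increasing, pairwise separated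
blocks, and let `S` collect the values of the even-indexed blocks. -/

lemma forall_card_eq_one_subset_iff {α : Type*} {X : Set α} {P : Finset α → Prop} :
    (∀ s : Finset α, s.card = 1 → ↑s ⊆ X → P s) ↔ ∀ x ∈ X, P {x} := by
  refine ⟨fun h x hx => h {x} (Finset.card_singleton x) (by simpa using hx), ?_⟩
  rintro h s hs hsX
  obtain ⟨a, rfl⟩ := Finset.card_eq_one.1 hs
  exact h a (by simpa using hsX)

lemma blocks_apply_lt_apply {α : Type*} [Preorder α] {n : ℕ} {a : ℕ → Fin (n + 1) → α}
    (hmono : ∀ i, Monotone (a i)) (hstep : ∀ i, a i (Fin.last n) < a (i + 1) 0)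
    {i j : ℕ} (hij : i < j) (u v : Fin (n + 1)) : a i u < a j v := by
  have hstart : StrictMono fun i => a i 0 := strictMono_nat_of_lt_succ fun i =>
    (hmono i (Fin.zero_le _)).trans_lt (hstep i)
  calc a i u ≤ a i (Fin.last n) := hmono i (Fin.le_last u)
    _ < a (i + 1) 0 := hstep i
    _ ≤ a j 0 := hstart.monotone hij
    _ ≤ a j v := hmono j (Fin.zero_le v)

lemma memL_one_of_injective {f : Finset ℕ → Fin 2 → ℕ}
    (hmono : ∀ s : Finset ℕ, s.card = 1 → StrictMono (f s))
    (hinj : Function.Injective fun k => f {k} 0) : MemL 1 f := by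
  refine ⟨hmono, ?_⟩
  rintro ⟨X, m, hm1, hm, t, hX, hcone⟩
  obtain ⟨x, hx, y, hy, hxy⟩ := hX.nontrivial
  rw [forall_card_eq_one_subset_iff] at hcone
  exact hxy (hinj ((hcone x hx ⟨0, hm1⟩).trans (hcone y hy ⟨0, hm1⟩).symm))

lemma splits_of_lSplits_one {f : Finset ℕ → Fin 2 → ℕ} {S A : Set ℕ}
    (hinj : Function.Injective fun k => f {k} 0) (hA : ∀ k, f {k} 0 ∈ A)
    (h : LSplits 1 S f) : Splits S A := by
  obtain ⟨X, Y, hX, hY, -, hXS, hYS⟩ := h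
  rw [forall_card_eq_one_subset_iff] at hXS hYS
  refine ⟨(hX.image hinj.injOn).mono ?_, (hY.image hinj.injOn).mono ?_⟩
  · rintro _ ⟨x, hx, rfl⟩
    exact ⟨hA x, hXS x hx 0⟩
  · rintro _ ⟨y, hy, rfl⟩
    exact ⟨hA y, hYS y hy 0⟩

namespace MemL

variable {f : Finset ℕ → Fin 2 → ℕ}

lemma finite_setOf_apply_zero_eq (hf : MemL 1 f) (c : ℕ) : {k | f {k} 0 = c}.Finite := by
  by_contra h
  refine hf.2 ⟨{k | f {k} 0 = c}, 1, le_rfl, by norm_num, fun _ => c, h, ?_⟩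
  rw [forall_card_eq_one_subset_iff]
  intro x hx i
  obtain rfl : i = 0 := Subsingleton.elim _ _
  exact hx

lemma exists_lt_apply_zero (hf : MemL 1 f) (N : ℕ) : ∃ k, N < f {k} 0 := by
  have hfin : {k | f {k} 0 ≤ N}.Finite :=
    ((Set.finite_Iic N).biUnion fun c _ => hf.finite_setOf_apply_zero_eq c).subset
      fun k hk => Set.mem_biUnion hk rfl
  obtain ⟨k, hk⟩ := hfin.infinite_compl.nonempty
  exact ⟨k, not_le.1 hk⟩

lemma exists_seq_separated (hf : MemL 1 f) :
    ∃ k : ℕ → ℕ, ∀ i j u v, i < j → f {k i} u < f {k j} v := by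
  choose g hg using hf.exists_lt_apply_zero
  -- each block `f {k (i+1)}` starts above the end of the previous one
  let k : ℕ → ℕ := fun i => Nat.rec (g 0) (fun _ p => g (f {p} 1)) i
  exact ⟨k, fun i j u v hij => blocks_apply_lt_apply (a := fun i => f {k i})
    (fun i => (hf.1 _ (Finset.card_singleton _)).monotone) (fun i => hg _) hij u v⟩

lemma exists_lSplits (hf : MemL 1 f) : ∃ S : Set ℕ, S.Infinite ∧ LSplits 1 S f := by
  obtain ⟨k, hsep⟩ := hf.exists_seq_separated
  have hindex : ∀ {i j u v}, f {k i} u = f {k j} v → i = j := fun he =>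
    le_antisymm (not_lt.1 fun h => (hsep _ _ _ _ h).ne' he)
      (not_lt.1 fun h => (hsep _ _ _ _ h).ne he)
  have hk : Function.Injective k := fun i j h => hindex (u := 0) (v := 0) (by rw [h])
  have hzero : Function.Injective fun i => f {k i} 0 := fun i j h => hindex h
  have hevens : {i : ℕ | Even i}.Infinite :=
    Set.infinite_of_forall_exists_gt fun a => ⟨2 * (a + 1), even_two_mul _, by omega⟩
  have hodds : {i : ℕ | ¬Even i}.Infinite :=
    Set.infinite_of_forall_exists_gt fun a =>
      ⟨2 * a + 1, Nat.not_even_two_mul_add_one a, by omega⟩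
  refine ⟨(fun p : ℕ × Fin 2 => f {k p.1} p.2) '' {p | Even p.1}, ?_,
    k '' {i | Even i}, k '' {i | ¬Even i}, hevens.image hk.injOn, hodds.image hk.injOn,
    (Set.disjoint_image_iff hk).2 disjoint_compl_right, ?_, ?_⟩
  · refine (hevens.image hzero.injOn).mono ?_
    rintro _ ⟨i, hi, rfl⟩
    exact ⟨(i, 0), hi, rfl⟩
  · rw [forall_card_eq_one_subset_iff]
    rintro _ ⟨i, hi, rfl⟩ u
    exact ⟨(i, u), hi, rfl⟩
  · rw [forall_card_eq_one_subset_iff]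
    rintro _ ⟨j, hj, rfl⟩ u ⟨⟨i, v⟩, hi, he⟩
    exact hj (hindex he ▸ hi)

end MemL

lemma isLSplittingFamily_one_setOf_infinite :
    IsLSplittingFamily 1 {S : Set ℕ | S.Infinite} :=
  ⟨fun _ hS => hS, fun _ hf => hf.exists_lSplits⟩

lemma IsLSplittingFamily.isSplittingFamily {𝒮 : Set (Set ℕ)} (h : IsLSplittingFamily 1 𝒮) :
    IsSplittingFamily 𝒮 := by
  refine ⟨h.1, fun A hA => ?_⟩
  let f : Finset ℕ → Fin 2 → ℕ := fun s j => Nat.nth (· ∈ A) (∑ x ∈ s, x + j)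
  have hinj : Function.Injective fun k => f {k} 0 := fun x y hxy => by
    simpa [f] using Nat.nth_injective hA hxy
  have hmono : ∀ s : Finset ℕ, s.card = 1 → StrictMono (f s) := fun s _ i j hij =>
    Nat.nth_strictMono hA (by simpa using hij)
  obtain ⟨S, hS𝒮, hS⟩ := h.2 f (memL_one_of_injective hmono hinj)
  exact ⟨S, hS𝒮, splits_of_lSplits_one hinj (fun k => Nat.nth_mem_of_infinite hA _) hS⟩

/-- `𝔰 ≤ μ₁`. -/
theorem s_le_mu_one : sNumber ≤ muNumber 1 := by
  refine le_csInf ⟨_, _, isLSplittingFamily_one_setOf_infinite, rfl⟩ ?_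
  rintro c ⟨𝒮, h𝒮, rfl⟩
  exact csInf_le' ⟨𝒮, h𝒮.isSplittingFamily, rfl⟩
end

section
/- For every n ≥ 1, every L_{n+1}-splitting family is also an L_n-splitting family; hence μ_n ≤ μ_{n+1}. -/
open Finset

theorem exists_infinite_monochromatic_succ {κ : Type*} [Finite κ] {r : ℕ}
    (C : (Fin (r + 1) → ℕ) → κ)
    (ih : ∀ a : ℕ, ∀ {X : Set ℕ}, X.Infinite → ∃ Z ⊆ X, Z.Infinite ∧
      ∃ c, ∀ v : Fin r → ℕ, StrictMono v → (∀ p, v p ∈ Z) → C (Fin.cons a v) = c)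
    {X : Set ℕ} (hX : X.Infinite) :
    ∃ Z ⊆ X, Z.Infinite ∧ ∃ c, ∀ v : Fin (r + 1) → ℕ, StrictMono v → (∀ p, v p ∈ Z) → C v = c := by
  have : Nonempty κ := ⟨C 0⟩
  have step : ∀ P : Set ℕ, P.Infinite → ∃ a ∈ P, ∃ Q ⊆ P, Q.Infinite ∧ (∀ x ∈ Q, a < x) ∧
      ∃ c, ∀ v : Fin r → ℕ, StrictMono v → (∀ p, v p ∈ Q) → C (Fin.cons a v) = c := by
    intro P hP
    obtain ⟨a, ha⟩ := hP.nonempty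
    obtain ⟨Q, hQ, hQinf, c, hc⟩ := ih a (hP.sdiff (Set.finite_Iic a))
    exact ⟨a, ha, Q, fun x hx => (hQ hx).1, hQinf, fun x hx => not_le.1 (hQ hx).2, c, hc⟩
  choose! a ha Q hQP hQ hlt col hcol using step
  set P : ℕ → Set ℕ := fun k => Q^[k] X
  have hPsucc : ∀ k, P (k + 1) = Q (P k) := fun k => Function.iterate_succ_apply' Q k X
  have hP : ∀ k, (P k).Infinite := fun k =>
    Nat.rec hX (fun k ihk => (hPsucc k).symm ▸ hQ _ ihk) k
  have hanti : Antitone P := antitone_nat_of_succ_le fun k => (hPsucc k).symm ▸ hQP _ (hP k)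
  have hmem : ∀ k l, k < l → a (P l) ∈ Q (P k) := fun k l hkl =>
    hPsucc k ▸ hanti hkl (ha _ (hP l))
  have hmono : StrictMono fun k => a (P k) := fun k l hkl => hlt _ (hP k) _ (hmem k l hkl)
  obtain ⟨c, hc⟩ := Finite.exists_infinite_fiber fun k => col (P k)
  refine ⟨(fun k => a (P k)) '' ((fun k => col (P k)) ⁻¹' {c}), ?_,
    (Set.infinite_coe_iff.1 hc).image hmono.injective.injOn, c, ?_⟩
  · rintro _ ⟨k, -, rfl⟩
    exact hanti (Nat.zero_le k) (ha _ (hP k))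
  · intro v hv hvZ
    obtain ⟨k, hk, hk0⟩ := hvZ 0
    have htail : ∀ p, Fin.tail v p ∈ Q (P k) := by
      intro p
      obtain ⟨l, -, hl⟩ := hvZ p.succ
      rw [Fin.tail, ← hl]
      refine hmem k l (hmono.lt_iff_lt.1 ?_)
      simp only [hk0, hl]
      exact hv (Fin.succ_pos p)
    rw [← Fin.cons_self_tail v, ← hk0]
    exact (hcol _ (hP k) _ (hv.comp Fin.strictMono_succ) htail).trans hk

theorem exists_infinite_monochromatic {κ : Type*} [Finite κ] :
    ∀ (r : ℕ) (C : (Fin r → ℕ) → κ) {X : Set ℕ}, X.Infinite →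
      ∃ Z ⊆ X, Z.Infinite ∧ ∃ c, ∀ v : Fin r → ℕ, StrictMono v → (∀ p, v p ∈ Z) → C v = c
  | 0, C, X, hX =>
    ⟨X, subset_rfl, hX, C Fin.elim0, fun _ _ _ => congrArg C (Subsingleton.elim _ _)⟩
  | r + 1, C, _, hX => exists_infinite_monochromatic_succ C
    (fun a _ => exists_infinite_monochromatic r fun v => C (Fin.cons a v)) hX

theorem forall_card_eq_iff_forall_strictMono {α : Type*} [LinearOrder α] {r : ℕ} {X : Set α}
    {P : Finset α → Prop} :
    (∀ s : Finset α, s.card = r → ↑s ⊆ X → P s) ↔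
      ∀ v : Fin r → α, StrictMono v → (∀ p, v p ∈ X) → P (univ.image v) := by
  constructor
  · intro h v hv hvX
    refine h _ ?_ ?_
    · rw [card_image_of_injective _ hv.injective, card_univ, Fintype.card_fin]
    · simpa [Set.subset_def] using hvX
  · intro h s hs hsX
    rw [← s.image_orderEmbOfFin_univ hs]
    exact h _ (s.orderEmbOfFin hs).strictMono fun p => hsX (s.orderEmbOfFin_mem hs p)

theorem MemL.not_forall_apply_zero_le {m : ℕ} {g : Finset ℕ → Fin (m + 1) → ℕ} (hg : MemL m g)
    {X : Set ℕ} (hX : X.Infinite) (V : ℕ) :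
    ¬ ∀ s : Finset ℕ, s.card = m → ↑s ⊆ X → g s 0 ≤ V := by
  rw [forall_card_eq_iff_forall_strictMono]
  intro hV
  obtain ⟨Z, hZX, hZ, c, hc⟩ :=
    exists_infinite_monochromatic m (fun v => Fin.ofNat (V + 1) (g (univ.image v) 0)) hX
  refine hg.2 ⟨Z, 1, le_rfl, by omega, fun _ => c, hZ, ?_⟩
  rw [forall_card_eq_iff_forall_strictMono]
  intro v hv hvZ i
  rw [← hc v hv hvZ, Fin.val_ofNat,
    Nat.mod_eq_of_lt (Nat.lt_succ_of_le (hV v hv fun p => hZX (hvZ p))), Fin.fin_one_eq_zero i]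
  rfl

section UpdateInvariant

variable {α : Type*} {N : ℕ} {F : (Fin N → ℕ) → α}

theorem eq_of_forall_update_eq_of_forall_lt
    (hF : ∀ u p x, StrictMono u → StrictMono (Function.update u p x) →
      F (Function.update u p x) = F u)
    {u y : Fin N → ℕ} (hu : StrictMono u) (hy : StrictMono y) (huy : ∀ p q, u p < y q) :
    F y = F u := by
  -- replacing the coordinates of `u` by those of `y` one at a time, from the top, keeps the
  -- tuple increasing; `t k` is the tuple after `k` replacements
  set t : ℕ → Fin N → ℕ := fun k p => if N ≤ p + k then y p else u p
  have ht : ∀ k, StrictMono (t k) := by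
    intro k p q hpq
    have hpq' : (p : ℕ) < q := hpq
    simp only [t]
    split_ifs <;> first | omega | exact hy hpq | exact hu hpq | exact huy p q
  have hstep : ∀ k (hk : k < N),
      t (k + 1) = Function.update (t k) ⟨N - 1 - k, by omega⟩ (y ⟨N - 1 - k, by omega⟩) := by
    intro k hk
    funext q
    by_cases hq : q = ⟨N - 1 - k, by omega⟩
    · subst hq
      simp only [t, Function.update_self, ite_eq_left_iff]
      omega
    · have : (q : ℕ) ≠ N - 1 - k := fun h => hq (Fin.ext h)
      simp only [t, Function.update_of_ne hq]
      exact if_congr (by omega) rfl rfl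
  have hall : ∀ k, k ≤ N → F (t k) = F u := by
    intro k hk
    induction k with
    | zero => exact congrArg F (funext fun p => if_neg (by omega))
    | succ k ihk =>
      rw [hstep k hk, hF _ _ _ (ht k) (hstep k hk ▸ ht (k + 1)), ihk (by omega)]
  rw [← hall N le_rfl]
  exact congrArg F (funext fun p => (if_pos (by omega)).symm)

theorem eq_of_forall_update_eq
    (hF : ∀ u p x, StrictMono u → StrictMono (Function.update u p x) →
      F (Function.update u p x) = F u)
    {u u' : Fin N → ℕ} (hu : StrictMono u) (hu' : StrictMono u') : F u = F u' := by
  set M := univ.sup u ⊔ univ.sup u' + 1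
  have hy : StrictMono fun q : Fin N => M + q := fun p q hpq => by simpa using hpq
  have hu_lt : ∀ p (q : Fin N), u p < M + q := fun p q => by
    have := le_sup (f := u) (mem_univ p); omega
  have hu'_lt : ∀ p (q : Fin N), u' p < M + q := fun p q => by
    have := le_sup (f := u') (mem_univ p); omega
  exact (eq_of_forall_update_eq_of_forall_lt hF hu hy hu_lt).symm.trans
    (eq_of_forall_update_eq_of_forall_lt hF hu' hy hu'_lt)

end UpdateInvariant

theorem exists_strictMono_comp_eq_add {m N : ℕ} {β : Fin m → Fin N} (hβ : StrictMono β)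
    {c : Fin m → ℕ} (hc : Monotone c) :
    ∃ u : Fin N → ℕ, StrictMono u ∧ ∀ b, u (β b) = β b + c b := by
  refine ⟨fun p => p + (univ.filter fun b => β b ≤ p).sup c, fun p q hpq => ?_, fun b => ?_⟩
  · have : (univ.filter fun b => β b ≤ p).sup c ≤ (univ.filter fun b => β b ≤ q).sup c :=
      sup_mono fun b hb => by
        simp only [mem_filter, mem_univ, true_and] at hb ⊢
        exact hb.trans hpq.le
    have hpq' : (p : ℕ) < q := hpq
    simp only
    omega
  · simp only [add_right_inj]
    refine le_antisymm (Finset.sup_le fun b' hb' => hc ?_) (le_sup (by simp))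
    simpa [hβ.le_iff_le] using hb'

theorem exists_strictMono_image_eq_mul {m N L : ℕ} {B : Finset (Fin N)} (hB : B.card = m)
    (hNL : N ≤ L) {k : Fin m → ℕ} (hk : StrictMono k) :
    ∃ u : Fin N → ℕ, StrictMono u ∧ B.image u = univ.image fun b => L * (k b + 1) := by
  set β := B.orderEmbOfFin hB
  obtain ⟨u, hu, huβ⟩ := exists_strictMono_comp_eq_add β.strictMono
    (c := fun b => L * (k b + 1) - β b) fun b b' hbb' => by
      obtain rfl | hlt := hbb'.eq_or_lt
      · rfl
      have hgap : L * (k b + 1) + L ≤ L * (k b' + 1) := by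
        have := hk hlt; nlinarith
      have := (β b').isLt
      simp only
      omega
  refine ⟨u, hu, ?_⟩
  rw [← B.image_orderEmbOfFin_univ hB, image_image]
  refine image_congr fun b _ => ?_
  have := (β b).isLt
  have : L ≤ L * (k b + 1) := Nat.le_mul_of_pos_right _ (by omega)
  show u (β b) = _
  rw [huβ]
  omega

theorem Finset.exists_strictMono_image_compl_eq {α : Type*} [LinearOrder α] {s s' : Finset α}
    (hd : Disjoint s s') {N : ℕ} (hN : (s ∪ s').card = N) :
    ∃ w : Fin N → α, StrictMono w ∧ (∀ p, w p ∈ s ∪ s') ∧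
      ∃ A : Finset (Fin N), A.image w = s ∧ Aᶜ.image w = s' := by
  set w := (s ∪ s').orderEmbOfFin hN
  have hw : ∀ x ∈ s ∪ s', ∃ p, w p = x := fun x hx => by
    rwa [← Set.mem_range, Finset.range_orderEmbOfFin]
  refine ⟨w, w.strictMono, (s ∪ s').orderEmbOfFin_mem hN, univ.filter (w · ∈ s), ?_, ?_⟩
  · ext x
    simp only [mem_image, mem_filter, mem_univ, true_and]
    refine ⟨fun ⟨p, hp, hpx⟩ => hpx ▸ hp, fun hx => ?_⟩
    obtain ⟨p, rfl⟩ := hw x (mem_union_left _ hx)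
    exact ⟨p, hx, rfl⟩
  · ext x
    simp only [mem_image, compl_filter, mem_filter, mem_univ, true_and]
    constructor
    · rintro ⟨p, hp, rfl⟩
      exact (mem_union.1 ((s ∪ s').orderEmbOfFin_mem hN p)).resolve_left hp
    · intro hx
      obtain ⟨p, rfl⟩ := hw x (mem_union_right _ hx)
      exact ⟨p, disjoint_right.1 hd hx, rfl⟩

theorem apply_image_compl_eq_of_forall_apply_image_eq {m N : ℕ} {g : Finset ℕ → Fin (m + 1) → ℕ}
    {z : ℕ → ℕ} {A : Finset (Fin N)} {i j : Fin (m + 1)}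
    (h : ∀ u, StrictMono u → g (A.image (z ∘ u)) i = g (Aᶜ.image (z ∘ u)) j)
    {u u' : Fin N → ℕ} (hu : StrictMono u) (hu' : StrictMono u') :
    g (Aᶜ.image (z ∘ u)) j = g (Aᶜ.image (z ∘ u')) j := by
  refine eq_of_forall_update_eq (F := fun u => g (Aᶜ.image (z ∘ u)) j) ?_ hu hu'
  intro u p x hu hpx
  have himage : ∀ B : Finset (Fin N), p ∉ B →
      B.image (z ∘ Function.update u p x) = B.image (z ∘ u) := fun B hB =>
    image_congr fun q hq => by simp [Function.update_of_ne (ne_of_mem_of_not_mem hq hB)]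
  by_cases hp : p ∈ A
  · exact congrArg (g · j) (himage _ (notMem_compl.2 hp))
  · simp only [← h _ hpx, ← h _ hu, himage _ hp]

def coincidences {m : ℕ} (g : Finset ℕ → Fin (m + 1) → ℕ) (w : Fin (2 * m) → ℕ) :
    Set (Finset (Fin (2 * m)) × Fin (m + 1) × Fin (m + 1)) :=
  {x | x.1.card = m ∧ g (x.1.image w) x.2.1 = g (x.1ᶜ.image w) x.2.2}

theorem coincidences_eq_empty {m : ℕ} {g : Finset ℕ → Fin (m + 1) → ℕ} (hg : MemL m g)
    {Z : Set ℕ} (hZ : Z.Infinite) {c : Set (Finset (Fin (2 * m)) × Fin (m + 1) × Fin (m + 1))}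
    (hc : ∀ w : Fin (2 * m) → ℕ, StrictMono w → (∀ p, w p ∈ Z) → coincidences g w = c) :
    c = ∅ := by
  refine Set.eq_empty_of_forall_notMem fun ⟨A, i, j⟩ hAij => ?_
  set z := Nat.nth (· ∈ Z)
  have hz : StrictMono z := Nat.nth_strictMono hZ
  have hcoin : ∀ u, StrictMono u →
      A.card = m ∧ g (A.image (z ∘ u)) i = g (Aᶜ.image (z ∘ u)) j := fun u hu => by
    rw [← hc _ (hz.comp hu) fun p => Nat.nth_mem_of_infinite hZ _] at hAij
    exact hAij
  have hAc : Aᶜ.card = m := by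
    have := card_compl A
    rw [Fintype.card_fin, (hcoin _ strictMono_id).1] at this
    omega
  -- the gaps of `2m + 1` leave room to fill in the `A`-positions around any `m`-subset of `X'`
  set X' := Set.range fun k => z ((2 * m + 1) * (k + 1))
  have hX' : X'.Infinite := Set.infinite_range_of_injective
    (hz.comp fun k l hkl => by nlinarith).injective
  refine hg.not_forall_apply_zero_le hX' (g (Aᶜ.image (z ∘ Fin.val)) j) ?_
  rw [forall_card_eq_iff_forall_strictMono]
  intro e he heX'
  choose k hk using heX'
  have hkmono : StrictMono k := fun b b' hbb' => by
    have := he hbb'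
    rw [← hk, ← hk, hz.lt_iff_lt] at this
    exact Nat.lt_of_add_lt_add_right (Nat.lt_of_mul_lt_mul_left this)
  obtain ⟨u, hu, hAcu⟩ := exists_strictMono_image_eq_mul hAc (L := 2 * m + 1) (by omega) hkmono
  have he_image : univ.image e = Aᶜ.image (z ∘ u) := by
    rw [← image_image, hAcu, image_image]
    exact image_congr fun b _ => (hk b).symm
  have hcard : (univ.image e).card = m := by
    rw [card_image_of_injective _ he.injective, card_univ, Fintype.card_fin]
  calc g (univ.image e) 0 ≤ g (univ.image e) j := (hg.1 _ hcard).monotone (Fin.zero_le j)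
    _ = _ := he_image ▸ apply_image_compl_eq_of_forall_apply_image_eq
      (fun u hu => (hcoin u hu).2) hu Fin.val_strictMono

theorem apply_ne_apply_of_coincidences_eq_empty {m : ℕ} {g : Finset ℕ → Fin (m + 1) → ℕ}
    {Z : Set ℕ} (hc : ∀ w : Fin (2 * m) → ℕ, StrictMono w → (∀ p, w p ∈ Z) → coincidences g w = ∅)
    {s s' : Finset ℕ} (hd : Disjoint s s') (hs : s.card = m) (hs' : s'.card = m)
    (hsZ : ↑s ⊆ Z) (hs'Z : ↑s' ⊆ Z) (i j : Fin (m + 1)) : g s i ≠ g s' j := by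
  intro hij
  obtain ⟨w, hw, hwss', A, hA, hAc⟩ := exists_strictMono_image_compl_eq hd (N := 2 * m)
    (by rw [card_union_of_disjoint hd, hs, hs', two_mul])
  have hwZ : ∀ p, w p ∈ Z := fun p =>
    (mem_union.1 (hwss' p)).elim (fun h => hsZ h) fun h => hs'Z h
  have : (A, i, j) ∈ coincidences g w :=
    ⟨by rw [← card_image_of_injective A hw.injective, hA, hs], by rw [hA, hAc]; exact hij⟩
  rwa [hc w hw hwZ] at this

theorem MemL.exists_lSplits_s11 {m : ℕ} {g : Finset ℕ → Fin (m + 1) → ℕ} (hg : MemL m g) :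
    ∃ S : Set ℕ, S.Infinite ∧ LSplits m S g := by
  obtain ⟨Z, -, hZ, c, hc⟩ := exists_infinite_monochromatic _ (coincidences g) Set.infinite_univ
  obtain rfl := coincidences_eq_empty hg hZ hc
  set z := Nat.nth (· ∈ Z)
  have hz : StrictMono z := Nat.nth_strictMono hZ
  have hXZ : Set.range (fun k => z (2 * k)) ⊆ Z :=
    Set.range_subset_iff.2 fun _ => Nat.nth_mem_of_infinite hZ _
  have hYZ : Set.range (fun k => z (2 * k + 1)) ⊆ Z :=
    Set.range_subset_iff.2 fun _ => Nat.nth_mem_of_infinite hZ _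
  set X := Set.range fun k => z (2 * k)
  set Y := Set.range fun k => z (2 * k + 1)
  have hX : X.Infinite := Set.infinite_range_of_injective
    (hz.comp fun k l (h : k < l) => show 2 * k < 2 * l by omega).injective
  have hY : Y.Infinite := Set.infinite_range_of_injective
    (hz.comp fun k l (h : k < l) => show 2 * k + 1 < 2 * l + 1 by omega).injective
  have hXY : Disjoint X Y := Set.disjoint_left.2 fun _ ⟨k, hk⟩ ⟨l, hl⟩ => by
    have := hz.injective (hk.trans hl.symm)
    omega
  refine ⟨{x | ∃ s : Finset ℕ, s.card = m ∧ ↑s ⊆ X ∧ ∃ i, g s i = x}, ?_, X, Y, hX, hY, hXY,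
    fun s hs hsX i => ⟨s, hs, hsX, i, rfl⟩, ?_⟩
  · exact Set.infinite_of_not_bddAbove fun ⟨V, hV⟩ =>
      hg.not_forall_apply_zero_le hX V fun s hs hsX => hV ⟨s, hs, hsX, 0, rfl⟩
  · rintro s' hs' hs'Y j ⟨s, hs, hsX, i, hij⟩
    exact apply_ne_apply_of_coincidences_eq_empty hc (disjoint_coe.1 (hXY.mono hsX hs'Y)) hs hs'
      (hsX.trans hXZ) (hs'Y.trans hYZ) i j hij

theorem isLSplittingFamily_setOf_infinite (m : ℕ) : IsLSplittingFamily m {S | S.Infinite} :=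
  ⟨fun _ hS => hS, fun _ hg => hg.exists_lSplits_s11⟩

def liftByMax {n : ℕ} (f : Finset ℕ → Fin (n + 1) → ℕ) (s : Finset ℕ) : Fin (n + 2) → ℕ :=
  Fin.snoc (α := fun _ => ℕ) (f (s.erase (s.sup id))) (f (s.erase (s.sup id)) (Fin.last n) + 1)

theorem liftByMax_insert_castSucc {n : ℕ} (f : Finset ℕ → Fin (n + 1) → ℕ) {s : Finset ℕ}
    {M : ℕ} (hM : ∀ x ∈ s, x < M) (i : Fin (n + 1)) :
    liftByMax f (insert M s) i.castSucc = f s i := by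
  have hsup : (insert M s).sup id = M :=
    (sup_insert (f := id)).trans (sup_eq_left.2 (Finset.sup_le fun x hx => (hM x hx).le))
  rw [liftByMax, Fin.snoc_castSucc, hsup, erase_insert fun h => (hM M h).false]

theorem forall_of_forall_liftByMax {n : ℕ} (f : Finset ℕ → Fin (n + 1) → ℕ)
    {Q : (Fin (n + 1) → ℕ) → Prop} {X : Set ℕ} (hX : X.Infinite)
    (h : ∀ s : Finset ℕ, s.card = n + 1 → ↑s ⊆ X → Q fun i => liftByMax f s i.castSucc) :
    ∀ s : Finset ℕ, s.card = n → ↑s ⊆ X → Q (f s) := by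
  intro s hs hsX
  obtain ⟨M, hMX, hM⟩ := hX.exists_gt (s.sup id)
  have hlt : ∀ x ∈ s, x < M := fun x hx => (le_sup (f := id) hx).trans_lt hM
  have := h (insert M s) (by rw [card_insert_of_notMem fun h => (hlt M h).false, hs])
    (by rw [coe_insert]; exact Set.insert_subset hMX hsX)
  simpa only [liftByMax_insert_castSucc f hlt] using this

theorem MemL.liftByMax {n : ℕ} {f : Finset ℕ → Fin (n + 1) → ℕ} (hf : MemL n f) :
    MemL (n + 1) (liftByMax f) := by
  constructor
  · intro s hs
    obtain ⟨M, hM, hsup⟩ := exists_mem_eq_sup s (card_pos.1 (by omega)) id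
    have hcard : (s.erase (s.sup id)).card = n := by
      rw [card_erase_of_mem (hsup ▸ hM), hs, Nat.add_sub_cancel]
    rw [_root_.liftByMax, ← Fin.insertNth_last']
    exact Fin.strictMono_insertNth_last (hf.1 _ hcard) _ (Nat.lt_succ_self _)
  · rintro ⟨X, k, hk1, hk, t, hX, hcone⟩
    refine hf.2 ⟨X, min k (n + 1), by omega, min_le_right _ _,
      fun i => t (Fin.castLE (min_le_left _ _) i), hX, ?_⟩
    exact forall_of_forall_liftByMax f hX
      (Q := fun φ => ∀ i, φ (Fin.castLE _ i) = t (Fin.castLE (min_le_left _ _) i))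
      fun s hs hsX i => hcone s hs hsX (Fin.castLE (min_le_left _ _) i)

theorem LSplits.of_liftByMax {n : ℕ} {S : Set ℕ} {f : Finset ℕ → Fin (n + 1) → ℕ}
    (h : LSplits (n + 1) S (liftByMax f)) : LSplits n S f := by
  obtain ⟨X, Y, hX, hY, hXY, hXS, hYS⟩ := h
  exact ⟨X, Y, hX, hY, hXY,
    forall_of_forall_liftByMax f hX (Q := fun φ => ∀ i, φ i ∈ S) fun s hs hsX _ => hXS s hs hsX _,
    forall_of_forall_liftByMax f hY (Q := fun φ => ∀ i, φ i ∉ S) fun s hs hsY _ => hYS s hs hsY _⟩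

theorem IsLSplittingFamily.of_succ {n : ℕ} {𝒮 : Set (Set ℕ)} (h : IsLSplittingFamily (n + 1) 𝒮) :
    IsLSplittingFamily n 𝒮 :=
  ⟨h.1, fun _ hf =>
    let ⟨S, hS, hsplit⟩ := h.2 _ hf.liftByMax
    ⟨S, hS, hsplit.of_liftByMax⟩⟩

theorem muNumber_le_muNumber_succ (n : ℕ) : muNumber n ≤ muNumber (n + 1) :=
  csInf_le_csInf (OrderBot.bddBelow _) ⟨_, _, isLSplittingFamily_setOf_infinite (n + 1), rfl⟩
    fun _ ⟨𝒮, h, hc⟩ => ⟨𝒮, h.of_succ, hc⟩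

/-- For every `n ≥ 1`, every `L_{n+1}`-splitting family is `L_n`-splitting;
hence `μ_n ≤ μ_{n+1}`. -/
theorem lSplitting_succ_is_lSplitting :
    ∀ n : ℕ, 1 ≤ n →
      (∀ 𝒮 : Set (Set ℕ), IsLSplittingFamily (n + 1) 𝒮 → IsLSplittingFamily n 𝒮) ∧
      muNumber n ≤ muNumber (n + 1) :=
  fun n _ => ⟨fun _ => IsLSplittingFamily.of_succ, muNumber_le_muNumber_succ n⟩
end

section
/- If A is an almost disjoint family such that the Franklin space F(A) is 2-sequentially compact, then F(A) is Fréchet. -/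
/-- An almost disjoint family on `N`: infinite sets with pairwise finite intersections. -/
def IsAD {N : Type*} (𝒜 : Set (Set N)) : Prop :=
  (∀ A ∈ 𝒜, A.Infinite) ∧ ∀ A ∈ 𝒜, ∀ B ∈ 𝒜, A ≠ B → (A ∩ B).Finite

/-- The underlying set of the Franklin space of an a.d. family `𝒜` on `N`
(the one-point compactification of the Isbell–Mrówka space); `none` is `∞`. -/
abbrev Franklin (N : Type*) (𝒜 : Set (Set N)) : Type _ := Option (N ⊕ 𝒜)

/-- The topology of the Franklin space, generated by: singletons of isolated points,
the basic neighborhoods `{A} ∪ (A \ F)` of points `A ∈ 𝒜`, and the basic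
neighborhoods of `∞`. -/
def franklinTop (N : Type*) (𝒜 : Set (Set N)) : TopologicalSpace (Franklin N 𝒜) :=
  TopologicalSpace.generateFrom (
    {U | ∃ n : N, U = {some (Sum.inl n)}} ∪
    {U | ∃ (A : 𝒜) (F : Set N), F.Finite ∧
         U = insert (some (Sum.inr A)) {x | ∃ n ∈ (A : Set N) \ F, x = some (Sum.inl n)}} ∪
    {U | ∃ (𝔅 : Set (Set N)) (F : Set N), 𝔅.Finite ∧ 𝔅 ⊆ 𝒜 ∧ F.Finite ∧
         U = insert none ({x | ∃ A : 𝒜, (A : Set N) ∉ 𝔅 ∧ x = some (Sum.inr A)} ∪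
                          {x | ∃ n : N, n ∉ ⋃₀ 𝔅 ∧ n ∉ F ∧ x = some (Sum.inl n)})})

/-- A Fréchet(–Urysohn) space. -/
def IsFrechet (X : Type*) [TopologicalSpace X] : Prop :=
  ∀ (A : Set X) (x : X), x ∈ closure A →
    ∃ u : ℕ → X, (∀ n, u n ∈ A) ∧ Filter.Tendsto u Filter.atTop (nhds x)

/- ###################  Auxiliary development  ################### -/

open Set Filter Topology TopologicalSpace Function

/-- The generating family of the Franklin topology. -/
def FB (N : Type*) (𝒜 : Set (Set N)) : Set (Set (Franklin N 𝒜)) :=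
    {U | ∃ n : N, U = {some (Sum.inl n)}} ∪
    {U | ∃ (A : 𝒜) (F : Set N), F.Finite ∧
         U = insert (some (Sum.inr A)) {x | ∃ n ∈ (A : Set N) \ F, x = some (Sum.inl n)}} ∪
    {U | ∃ (𝔅 : Set (Set N)) (F : Set N), 𝔅.Finite ∧ 𝔅 ⊆ 𝒜 ∧ F.Finite ∧
         U = insert none ({x | ∃ A : 𝒜, (A : Set N) ∉ 𝔅 ∧ x = some (Sum.inr A)} ∪
                          {x | ∃ n : N, n ∉ ⋃₀ 𝔅 ∧ n ∉ F ∧ x = some (Sum.inl n)})}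

lemma franklinTop_eq (N : Type*) (𝒜 : Set (Set N)) :
    franklinTop N 𝒜 = TopologicalSpace.generateFrom (FB N 𝒜) := rfl

lemma FB_mem_nhds {N : Type*} {𝒜 : Set (Set N)} {U : Set (Franklin N 𝒜)}
    (hU : U ∈ FB N 𝒜) {x : Franklin N 𝒜} (hx : x ∈ U) :
    U ∈ @nhds _ (franklinTop N 𝒜) x := by
  letI := franklinTop N 𝒜
  have : IsOpen U := isOpen_generateFrom_of_mem hU
  exact this.mem_nhds hx

lemma tendsto_FB {N : Type*} {𝒜 : Set (Set N)} {u : ℕ → Franklin N 𝒜} {x : Franklin N 𝒜}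
    (h : ∀ s ∈ FB N 𝒜, x ∈ s → ∀ᶠ k in atTop, u k ∈ s) :
    Filter.Tendsto u Filter.atTop (@nhds _ (franklinTop N 𝒜) x) :=
  tendsto_nhds_generateFrom_iff.mpr fun s hs hx => h s hs hx

lemma infinite_of_forall_diff_nonempty {α : Type*} {S : Set α}
    (h : ∀ F : Set α, F.Finite → (S \ F).Nonempty) : S.Infinite := by
  by_contra h'
  rw [Set.not_infinite] at h'
  obtain ⟨x, hx⟩ := h S h'
  exact hx.2 hx.1

lemma infinite_exists_gt {S : Set ℕ} (hS : S.Infinite) (a : ℕ) : ∃ b ∈ S, a < b := by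
  by_contra h
  push_neg at h
  exact hS ((Set.finite_Iic a).subset fun x hx => h x hx)

lemma inter_sUnion_finite {N : Type*} {𝒜 : Set (Set N)} (hAD : IsAD 𝒜) {A : Set N}
    (hA : A ∈ 𝒜) {𝔅 : Set (Set N)} (h𝔅 : 𝔅.Finite) (h𝔅𝒜 : 𝔅 ⊆ 𝒜) (hA𝔅 : A ∉ 𝔅) :
    (A ∩ ⋃₀ 𝔅).Finite := by
  have : A ∩ ⋃₀ 𝔅 ⊆ ⋃ B ∈ 𝔅, A ∩ B := by
    rintro x ⟨hxA, B, hB, hxB⟩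
    exact Set.mem_biUnion hB ⟨hxA, hxB⟩
  exact (h𝔅.biUnion fun B hB =>
    hAD.2 A hA B (h𝔅𝒜 hB) fun e => hA𝔅 (e ▸ hB)).subset this

lemma eventually_not_mem {α : Type*} {g : ℕ → α} (hg : Function.Injective g) {W : Set α}
    (hW : (W ∩ Set.range g).Finite) : ∀ᶠ k in atTop, g k ∉ W := by
  rw [← Nat.cofinite_eq_atTop]
  have hfin : (g ⁻¹' (W ∩ Set.range g)).Finite := hW.preimage hg.injOn
  exact hfin.eventually_cofinite_notMem.mono fun k hk hkW => hk ⟨hkW, Set.mem_range_self k⟩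

/-- The combinatorial core: if the Franklin space is 2-sequentially compact and `D` is a
set that is not almost covered by finitely many members of `𝒜`, then `D` has an infinite
subset almost disjoint from every member of `𝒜`. -/
lemma exists_ad_subset {N : Type} [Countable N] {𝒜 : Set (Set N)} (hAD : IsAD 𝒜)
    (h2 : @NSeqCompact 2 (Franklin N 𝒜) (franklinTop N 𝒜))
    {D : Set N} (hD : ∀ 𝔅 : Set (Set N), 𝔅.Finite → 𝔅 ⊆ 𝒜 → (D \ ⋃₀ 𝔅).Infinite) :
    ∃ C ⊆ D, C.Infinite ∧ ∀ A ∈ 𝒜, (A ∩ C).Finite := by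
  classical
  by_contra hcon
  push_neg at hcon
  have star : ∀ C : Set N, C ⊆ D → C.Infinite → ∃ A ∈ 𝒜, (A ∩ C).Infinite := by
    intro C hCD hCinf
    obtain ⟨A, hA, hfin⟩ := hcon C hCD hCinf
    exact ⟨A, hA, hfin⟩
  -- choice function picking a new member of 𝒜 meeting the rest of `D` infinitely
  have key : ∀ 𝔅 : Set (Set N), ∃ A : Set N, (𝔅.Finite ∧ 𝔅 ⊆ 𝒜) →
      A ∈ 𝒜 ∧ A ∉ 𝔅 ∧ (A ∩ (D \ ⋃₀ 𝔅)).Infinite := by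
    intro 𝔅
    by_cases h : 𝔅.Finite ∧ 𝔅 ⊆ 𝒜
    · obtain ⟨A, hA𝒜, hAinf⟩ := star _ Set.diff_subset (hD 𝔅 h.1 h.2)
      refine ⟨A, fun _ => ⟨hA𝒜, fun hA𝔅 => ?_, hAinf⟩⟩
      have hsub : A ∩ (D \ ⋃₀ 𝔅) ⊆ (∅ : Set N) := fun x hx => hx.2.2 ⟨A, hA𝔅, hx.1⟩
      exact hAinf (Set.finite_empty.subset hsub)
    · exact ⟨∅, fun hh => absurd hh h⟩
  choose Φ hΦ using key
  set P : ℕ → Set (Set N) := fun k => Nat.rec ∅ (fun _ Pk => insert (Φ Pk) Pk) k with hP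
  have hPsucc : ∀ k, P (k + 1) = insert (Φ (P k)) (P k) := fun _ => rfl
  have hPfin : ∀ k, (P k).Finite ∧ P k ⊆ 𝒜 := by
    intro k
    induction k with
    | zero => exact ⟨Set.finite_empty, Set.empty_subset _⟩
    | succ k ih =>
      rw [hPsucc]
      exact ⟨ih.1.insert _, Set.insert_subset (hΦ _ ih).1 ih.2⟩
  set A : ℕ → Set N := fun k => Φ (P k) with hA
  have hAk : ∀ k, A k ∈ 𝒜 ∧ A k ∉ P k ∧ (A k ∩ (D \ ⋃₀ P k)).Infinite :=
    fun k => hΦ _ (hPfin k)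
  have hPmono : Monotone P :=
    monotone_nat_of_le_succ fun k => by rw [hPsucc]; exact Set.subset_insert _ _
  have hAmem : ∀ {j k}, j < k → A j ∈ P k := by
    intro j k hjk
    have hj : A j ∈ P (j + 1) := by rw [hPsucc]; exact Set.mem_insert _ _
    exact hPmono hjk hj
  have hAne : ∀ {j k}, j < k → A j ≠ A k := by
    intro j k hjk he
    exact (hAk k).2.1 (he ▸ hAmem hjk)
  set E : ℕ → Set N := fun k => A k ∩ (D \ ⋃₀ P k) with hE
  have hEinf : ∀ k, (E k).Infinite := fun k => (hAk k).2.2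
  have hED : ∀ k, E k ⊆ D := fun k x hx => hx.2.1
  have hEA : ∀ k, E k ⊆ A k := fun k x hx => hx.1
  have hEdisj : ∀ {j k}, j ≠ k → ∀ x, x ∈ E j → x ∈ E k → False := by
    have base : ∀ {j k}, j < k → ∀ x, x ∈ E j → x ∈ E k → False := by
      intro j k hjk x hxj hxk
      exact hxk.2.2 ⟨A j, hAmem hjk, hEA j hxj⟩
    intro j k hjk x hxj hxk
    rcases hjk.lt_or_gt with h | h
    · exact base h x hxj hxk
    · exact base h x hxk hxj
  set y : ℕ → ℕ → N := fun k m => (Set.Infinite.natEmbedding (E k) (hEinf k) m).1 with hy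
  have hy_mem : ∀ k m, y k m ∈ E k := fun k m => (Set.Infinite.natEmbedding (E k) (hEinf k) m).2
  have hy_inj : ∀ k, Function.Injective (y k) := fun k a b h =>
    (Set.Infinite.natEmbedding (E k) (hEinf k)).injective (Subtype.coe_injective h)
  set f : Finset ℕ → Franklin N 𝒜 := fun s =>
    if h : s.Nonempty then some (Sum.inl (y (s.min' h) (s.max' h))) else none with hf
  -- computing f on pairs
  have hpair : ∀ n m : ℕ, n < m →
      ({n, m} : Finset ℕ).card = 2 ∧ f {n, m} = some (Sum.inl (y n m)) := by
    intro n m hnm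
    have hne : n ≠ m := hnm.ne
    have hcard : ({n, m} : Finset ℕ).card = 2 := by
      rw [Finset.card_insert_of_notMem (by simp [hne]), Finset.card_singleton]
    have hnonempty : ({n, m} : Finset ℕ).Nonempty := ⟨n, by simp⟩
    have hmin : ∀ h : ({n, m} : Finset ℕ).Nonempty, ({n, m} : Finset ℕ).min' h = n := by
      intro h
      refine le_antisymm (Finset.min'_le _ _ (by simp)) (Finset.le_min' _ _ _ ?_)
      intro z hz
      rcases Finset.mem_insert.mp hz with rfl | hz
      · exact le_rfl
      · rw [Finset.mem_singleton] at hz; exact hz ▸ hnm.le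
    have hmax : ∀ h : ({n, m} : Finset ℕ).Nonempty, ({n, m} : Finset ℕ).max' h = m := by
      intro h
      refine le_antisymm (Finset.max'_le _ _ _ ?_) (Finset.le_max' _ _ (by simp))
      intro z hz
      rcases Finset.mem_insert.mp hz with rfl | hz
      · exact hnm.le
      · rw [Finset.mem_singleton] at hz; exact hz.le
    refine ⟨hcard, ?_⟩
    rw [hf]
    simp only [dif_pos hnonempty, hmin, hmax]
  obtain ⟨B, hBinf, p, hconv⟩ := h2 f
  have hsubBF : ∀ {n m : ℕ} {F₀ : Finset ℕ}, n ∈ B → m ∈ B → n ∉ F₀ → m ∉ F₀ →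
      (↑({n, m} : Finset ℕ) : Set ℕ) ⊆ B \ ↑F₀ := by
    intro n m F₀ hnB hmB hnF hmF z hz
    simp only [Finset.coe_insert, Finset.coe_singleton, Set.mem_insert_iff,
      Set.mem_singleton_iff] at hz
    rcases hz with rfl | rfl
    · exact ⟨hnB, fun h => hnF (Finset.mem_coe.mp h)⟩
    · exact ⟨hmB, fun h => hmF (Finset.mem_coe.mp h)⟩
  have hgt_sup : ∀ {F₀ : Finset ℕ} {a : ℕ}, F₀.sup id < a → a ∉ F₀ := by
    intro F₀ a ha h
    exact absurd (Finset.le_sup (f := id) h) (not_le.mpr ha)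
  rcases p with _ | q | A₀
  -- case p = ∞
  · set b : ℕ → ℕ := Nat.nth (· ∈ B) with hb
    have hbmono : StrictMono b := Nat.nth_strictMono hBinf
    have hbB : ∀ i, b i ∈ B := fun i => Nat.nth_mem_of_infinite hBinf i
    set v : ℕ → N := fun i => y (b (2 * i)) (b (2 * i + 1)) with hv
    have hv_memE : ∀ i, v i ∈ E (b (2 * i)) := fun i => hy_mem _ _
    have hv_inj : Function.Injective v := by
      intro i j hij
      by_contra hne
      have hbne : b (2 * i) ≠ b (2 * j) := fun h => by
        have := hbmono.injective h
        omega
      exact hEdisj hbne (v i) (hv_memE i) (hij ▸ hv_memE j)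
    obtain ⟨Astar, hAstar𝒜, hAstarInf⟩ := star (Set.range v)
      (by rintro x ⟨i, rfl⟩; exact hED _ (hv_memE i)) (Set.infinite_range_of_injective hv_inj)
    have hI : (v ⁻¹' Astar).Infinite :=
      (hAstarInf.preimage Set.inter_subset_right).mono
        (Set.preimage_mono Set.inter_subset_left)
    set U : Set (Franklin N 𝒜) := insert none
        ({x | ∃ A : 𝒜, (A : Set N) ∉ ({Astar} : Set (Set N)) ∧ x = some (Sum.inr A)} ∪
         {x | ∃ n : N, n ∉ ⋃₀ ({Astar} : Set (Set N)) ∧ n ∉ (∅ : Set N) ∧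
           x = some (Sum.inl n)}) with hU
    have hUFB : U ∈ FB N 𝒜 :=
      Or.inr ⟨{Astar}, ∅, Set.finite_singleton _, Set.singleton_subset_iff.mpr hAstar𝒜,
        Set.finite_empty, rfl⟩
    obtain ⟨F₀, hF₀⟩ := hconv U (FB_mem_nhds hUFB (Set.mem_insert _ _))
    obtain ⟨i, hiA, hisup⟩ := infinite_exists_gt hI (F₀.sup id)
    have h2i : F₀.sup id < b (2 * i) := lt_of_lt_of_le (lt_of_lt_of_le hisup (by omega))
      (hbmono.le_apply)
    have h2i1 : F₀.sup id < b (2 * i + 1) := h2i.trans (hbmono (by omega))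
    have hlt : b (2 * i) < b (2 * i + 1) := hbmono (by omega)
    have hmem := hF₀ {b (2 * i), b (2 * i + 1)} (hpair _ _ hlt).1
      (hsubBF (hbB _) (hbB _) (hgt_sup h2i) (hgt_sup h2i1))
    rw [(hpair _ _ hlt).2] at hmem
    simp only [hU, Set.mem_insert_iff, Set.mem_union, Set.mem_setOf_eq] at hmem
    rcases hmem with hmem | ⟨A', _, hA'⟩ | ⟨n, hn, _, hn'⟩
    · exact Option.some_ne_none _ hmem
    · simp at hA'
    · have : n = v i := by
        have := Option.some.inj hn'
        exact (Sum.inl.inj this).symm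
      exact hn (this ▸ ⟨Astar, Set.mem_singleton _, hiA⟩)
  -- case p = isolated point q
  · set U : Set (Franklin N 𝒜) := {some (Sum.inl q)} with hU
    have hUFB : U ∈ FB N 𝒜 := Or.inl (Or.inl ⟨q, rfl⟩)
    obtain ⟨F₀, hF₀⟩ := hconv U (FB_mem_nhds hUFB rfl)
    obtain ⟨n, hnB, hn⟩ := infinite_exists_gt hBinf (F₀.sup id)
    obtain ⟨m, hmB, hm⟩ := infinite_exists_gt hBinf n
    obtain ⟨m', hm'B, hm'⟩ := infinite_exists_gt hBinf m
    have hnF : n ∉ F₀ := hgt_sup hn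
    have hmF : m ∉ F₀ := hgt_sup (hn.trans hm)
    have hm'F : m' ∉ F₀ := hgt_sup (hn.trans (hm.trans hm'))
    have h1 := hF₀ {n, m} (hpair _ _ hm).1 (hsubBF hnB hmB hnF hmF)
    have h2 := hF₀ {n, m'} (hpair _ _ (hm.trans hm')).1 (hsubBF hnB hm'B hnF hm'F)
    rw [(hpair _ _ hm).2] at h1
    rw [(hpair _ _ (hm.trans hm')).2] at h2
    have e1 : y n m = q := Sum.inl.inj (Option.some.inj h1)
    have e2 : y n m' = q := Sum.inl.inj (Option.some.inj h2)
    exact absurd (hy_inj n (e1.trans e2.symm)) hm'.ne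
  -- case p = some A₀ ∈ 𝒜
  · set U : Set (Franklin N 𝒜) := insert (some (Sum.inr A₀))
      {x | ∃ n ∈ (A₀ : Set N) \ (∅ : Set N), x = some (Sum.inl n)} with hU
    have hUFB : U ∈ FB N 𝒜 := Or.inl (Or.inr ⟨A₀, ∅, Set.finite_empty, rfl⟩)
    obtain ⟨F₀, hF₀⟩ := hconv U (FB_mem_nhds hUFB (Set.mem_insert _ _))
    obtain ⟨n₁, hn₁B, hn₁⟩ := infinite_exists_gt hBinf (F₀.sup id)
    obtain ⟨n₂, hn₂B, hn₂⟩ := infinite_exists_gt hBinf n₁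
    have hAne12 : A n₁ ≠ A n₂ := hAne hn₂
    -- pick n among n₁, n₂ with A n ≠ ↑A₀
    obtain ⟨n, hnB, hnsup, hAn⟩ : ∃ n, n ∈ B ∧ F₀.sup id < n ∧ A n ≠ (A₀ : Set N) := by
      by_cases h : A n₁ = (A₀ : Set N)
      · exact ⟨n₂, hn₂B, hn₁.trans hn₂, fun e => hAne12 (h ▸ e ▸ rfl)⟩
      · exact ⟨n₁, hn₁B, hn₁, h⟩
    have hnF : n ∉ F₀ := hgt_sup hnsup
    set M : Set ℕ := B \ Set.Iic n with hM
    have hMinf : M.Infinite := hBinf.diff (Set.finite_Iic n)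
    have himg : (fun m => y n m) '' M ⊆ A n ∩ (A₀ : Set N) := by
      rintro _ ⟨m, hmM, rfl⟩
      have hnm : n < m := not_le.mp fun h => hmM.2 h
      have hmF : m ∉ F₀ := hgt_sup (hnsup.trans hnm)
      have hmem := hF₀ {n, m} (hpair _ _ hnm).1 (hsubBF hnB hmM.1 hnF hmF)
      rw [(hpair _ _ hnm).2] at hmem
      simp only [hU, Set.mem_insert_iff, Set.mem_setOf_eq] at hmem
      rcases hmem with hmem | ⟨k, hk, hk'⟩
      · exact absurd (Option.some.inj hmem) (fun h => by cases h)
      · have hkeq : k = y n m := (Sum.inl.inj (Option.some.inj hk')).symm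
        refine ⟨hEA n (hy_mem n m), ?_⟩
        show y n m ∈ (A₀ : Set N)
        exact hkeq ▸ hk.1
    have hfinAA : (A n ∩ (A₀ : Set N)).Finite :=
      hAD.2 (A n) (hAk n).1 (A₀ : Set N) A₀.2 hAn
    exact (hMinf.image ((hy_inj n).injOn)) (hfinAA.subset himg)

/-- If `𝒜` is an almost disjoint family (on a countable set) whose Franklin space is
`2`-sequentially compact, then the Franklin space is Fréchet. -/
theorem franklin_frechet_of_twoSeqCompact {N : Type} [Countable N]
    (𝒜 : Set (Set N)) (hAD : IsAD 𝒜)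
    (h2 : @NSeqCompact 2 (Franklin N 𝒜) (franklinTop N 𝒜)) :
    @IsFrechet (Franklin N 𝒜) (franklinTop N 𝒜) := by
  classical
  letI := franklinTop N 𝒜
  intro S x hxcl
  by_cases hxS : x ∈ S
  · exact ⟨fun _ => x, fun _ => hxS, tendsto_const_nhds⟩
  have hclos : ∀ t ∈ @nhds _ (franklinTop N 𝒜) x, (t ∩ S).Nonempty := by
    letI := franklinTop N 𝒜
    exact mem_closure_iff_nhds.mp hxcl
  rcases x with _ | q | A
  -- case x = ∞
  · set T : Set (↥𝒜) := {A | some (Sum.inr A) ∈ S} with hT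
    by_cases hTinf : T.Infinite
    · -- infinitely many points of 𝒜 in S: they converge to ∞
      set w := Set.Infinite.natEmbedding T hTinf with hw
      refine ⟨fun k => some (Sum.inr (w k).1), fun k => (w k).2, tendsto_FB ?_⟩
      intro s hs hxs
      simp only [FB, Set.mem_union, Set.mem_setOf_eq] at hs
      rcases hs with (⟨n₀, rfl⟩ | ⟨A', F, hF, rfl⟩) | ⟨𝔅, F, h𝔅, h𝔅𝒜, hF, rfl⟩
      · simp at hxs
      · rcases Set.mem_insert_iff.mp hxs with h | ⟨n, _, h⟩ <;> simp at h
      · have hg : Function.Injective (fun k => (((w k).1 : Set N))) := by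
          intro a b h
          exact w.injective (Subtype.coe_injective (Subtype.coe_injective h))
        have := eventually_not_mem hg (h𝔅.inter_of_left _)
        refine this.mono fun k hk => ?_
        exact Set.mem_insert_iff.mpr (Or.inr (Or.inl ⟨(w k).1, hk, rfl⟩))
    · -- only finitely many points of 𝒜 in S: use isolated points of S
      have hTfin : T.Finite := Set.not_infinite.mp hTinf
      set 𝒜S : Set (Set N) := (fun A : ↥𝒜 => (A : Set N)) '' T with h𝒜S
      have h𝒜Sfin : 𝒜S.Finite := hTfin.image _
      have h𝒜S𝒜 : 𝒜S ⊆ 𝒜 := by rintro _ ⟨A', _, rfl⟩; exact A'.2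
      set D : Set N := {n | some (Sum.inl n) ∈ S} with hDdef
      have hD : ∀ 𝔅 : Set (Set N), 𝔅.Finite → 𝔅 ⊆ 𝒜 → (D \ ⋃₀ 𝔅).Infinite := by
        intro 𝔅 h𝔅 h𝔅𝒜
        apply infinite_of_forall_diff_nonempty
        intro F hF
        set U : Set (Franklin N 𝒜) := insert none
            ({x | ∃ A : 𝒜, (A : Set N) ∉ 𝔅 ∪ 𝒜S ∧ x = some (Sum.inr A)} ∪
             {x | ∃ n : N, n ∉ ⋃₀ (𝔅 ∪ 𝒜S) ∧ n ∉ F ∧ x = some (Sum.inl n)}) with hU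
        have hUFB : U ∈ FB N 𝒜 :=
          Or.inr ⟨𝔅 ∪ 𝒜S, F, h𝔅.union h𝒜Sfin, Set.union_subset h𝔅𝒜 h𝒜S𝒜, hF, rfl⟩
        obtain ⟨z, hzU, hzS⟩ := hclos U (FB_mem_nhds hUFB (Set.mem_insert _ _))
        simp only [hU, Set.mem_insert_iff, Set.mem_union, Set.mem_setOf_eq] at hzU
        rcases hzU with rfl | ⟨A', hA', rfl⟩ | ⟨n, hn, hnF, rfl⟩
        · exact absurd hzS hxS
        · refine absurd (Set.mem_union_right _ ?_) hA'
          rw [h𝒜S]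
          exact ⟨A', hzS, rfl⟩
        · exact ⟨n, ⟨hzS, fun h => hn (Set.sUnion_mono Set.subset_union_left h)⟩, hnF⟩
      obtain ⟨C, hCD, hCinf, hC⟩ := exists_ad_subset hAD h2 hD
      set c := Set.Infinite.natEmbedding C hCinf with hc
      refine ⟨fun k => some (Sum.inl (c k).1), fun k => hCD (c k).2, tendsto_FB ?_⟩
      intro s hs hxs
      simp only [FB, Set.mem_union, Set.mem_setOf_eq] at hs
      rcases hs with (⟨n₀, rfl⟩ | ⟨A', F, hF, rfl⟩) | ⟨𝔅, F, h𝔅, h𝔅𝒜, hF, rfl⟩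
      · simp at hxs
      · rcases Set.mem_insert_iff.mp hxs with h | ⟨n, _, h⟩ <;> simp at h
      · have hg : Function.Injective (fun k => (c k).1) := fun a b h =>
          c.injective (Subtype.coe_injective h)
        have hrange : Set.range (fun k => (c k).1) ⊆ C := by
          rintro _ ⟨k, rfl⟩; exact (c k).2
        have hWfin : ((⋃₀ 𝔅 ∪ F) ∩ Set.range (fun k => (c k).1)).Finite := by
          refine Set.Finite.subset
            (((h𝔅.biUnion fun A' hA' => hC A' (h𝔅𝒜 hA')).union hF)) ?_
          rintro z ⟨hz, hzr⟩
          rcases hz with ⟨A', hA', hzA'⟩ | hzF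
          · exact Or.inl (Set.mem_biUnion hA' ⟨hzA', hrange hzr⟩)
          · exact Or.inr hzF
        have := eventually_not_mem hg hWfin
        refine this.mono fun k hk => ?_
        exact Set.mem_insert_iff.mpr (Or.inr (Or.inr
          ⟨(c k).1, fun h => hk (Or.inl h), fun h => hk (Or.inr h), rfl⟩))
  -- case x = isolated point q : contradiction with x ∉ S
  · have hUFB : ({some (Sum.inl q)} : Set (Franklin N 𝒜)) ∈ FB N 𝒜 :=
      Or.inl (Or.inl ⟨q, rfl⟩)
    obtain ⟨z, hz, hzS⟩ := hclos {some (Sum.inl q)} (FB_mem_nhds hUFB rfl)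
    exact absurd (hz ▸ hzS) hxS
  -- case x = A ∈ 𝒜
  · set T : Set N := {n | n ∈ (A : Set N) ∧ some (Sum.inl n) ∈ S} with hT
    have hTinf : T.Infinite := by
      apply infinite_of_forall_diff_nonempty
      intro F hF
      set U : Set (Franklin N 𝒜) := insert (some (Sum.inr A))
          {x | ∃ n ∈ (A : Set N) \ F, x = some (Sum.inl n)} with hU
      have hUFB : U ∈ FB N 𝒜 := Or.inl (Or.inr ⟨A, F, hF, rfl⟩)
      obtain ⟨z, hzU, hzS⟩ := hclos U (FB_mem_nhds hUFB (Set.mem_insert _ _))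
      rcases Set.mem_insert_iff.mp hzU with rfl | ⟨n, hn, rfl⟩
      · exact absurd hzS hxS
      · exact ⟨n, ⟨hn.1, hzS⟩, hn.2⟩
    set c := Set.Infinite.natEmbedding T hTinf with hc
    refine ⟨fun k => some (Sum.inl (c k).1), fun k => (c k).2.2, tendsto_FB ?_⟩
    have hg : Function.Injective (fun k => (c k).1) := fun a b h =>
      c.injective (Subtype.coe_injective h)
    have hrange : Set.range (fun k => (c k).1) ⊆ (A : Set N) := by
      rintro _ ⟨k, rfl⟩; exact (c k).2.1
    intro s hs hxs
    simp only [FB, Set.mem_union, Set.mem_setOf_eq] at hs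
    rcases hs with (⟨n₀, rfl⟩ | ⟨A', F, hF, rfl⟩) | ⟨𝔅, F, h𝔅, h𝔅𝒜, hF, rfl⟩
    · simp at hxs
    · -- basic neighborhood of A' : necessarily A' = A
      rcases Set.mem_insert_iff.mp hxs with heq | ⟨n, _, heq⟩
      · have hA'A : A' = A := (Sum.inr.inj (Option.some.inj heq)).symm
        subst hA'A
        have := eventually_not_mem hg (hF.inter_of_left _)
        refine this.mono fun k hk => ?_
        exact Set.mem_insert_iff.mpr (Or.inr ⟨(c k).1, ⟨(c k).2.1, hk⟩, rfl⟩)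
      · simp at heq
    · -- basic neighborhood of ∞ : necessarily ↑A ∉ 𝔅
      rcases Set.mem_insert_iff.mp hxs with heq | hxs'
      · simp at heq
      rcases hxs' with ⟨A'', hA''𝔅, heq⟩ | ⟨n, _, _, heq⟩
      swap
      · simp at heq
      have hA''A : A'' = A := (Sum.inr.inj (Option.some.inj heq)).symm
      subst hA''A
      have hWfin : ((⋃₀ 𝔅 ∪ F) ∩ Set.range (fun k => (c k).1)).Finite := by
        refine Set.Finite.subset
          (((inter_sUnion_finite hAD A''.2 h𝔅 h𝔅𝒜 hA''𝔅).union hF)) ?_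
        rintro z ⟨hz, hzr⟩
        rcases hz with hz𝔅 | hzF
        · exact Or.inl ⟨hrange hzr, hz𝔅⟩
        · exact Or.inr hzF
      have := eventually_not_mem hg hWfin
      refine this.mono fun k hk => ?_
      exact Set.mem_insert_iff.mpr (Or.inr (Or.inr
        ⟨(c k).1, fun h => hk (Or.inl h), fun h => hk (Or.inr h), rfl⟩))
end
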